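/- arXiv:2003.10255 — 10 statements merged into one kernel-verified Lean document; each statement's English description precedes it below -/
import Mathlib

section
/- Let $(L,\leq,0,1)$ be a bounded lattice, $e\in L\setminus\{0,1\}$, and $I_e=\{x\in L: x\parallel e\}$. Let $S_e$ be a t-conorm on $[e,1]$ and define $U_S(x,y)=0$ if $(x,y)\in[0,e)^2$; $S_e(x,y)$ if $(x,y)\in[e,1]^2$; $y$ if $(x,y)\in[e,1]\times I_e$; $x$ if $(x,y)\in I_e\times[e,1]$; and $x\wedge y$ otherwise. If $U_S$ is associative, then for all $y,z\in I_e$, either $y\wedge z\in I_e$ or $y\wedge z=0$. -/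
namespace Uninorm

variable {L : Type*} [Lattice L] [BoundedOrder L]

open Classical in
/-- The operation `U_S` built from a t-conorm `S` on `[e, ⊤]`. -/
noncomputable def ofTConorm (e : L) (S : L → L → L) (x y : L) : L :=
  if x < e ∧ y < e then ⊥
  else if e ≤ x ∧ e ≤ y then S x y
  else if e ≤ x ∧ (¬ y ≤ e ∧ ¬ e ≤ y) then y
  else if (¬ x ≤ e ∧ ¬ e ≤ x) ∧ e ≤ y then x
  else x ⊓ y

variable {e x y z : L} {S : L → L → L}

theorem ofTConorm_of_lt_of_lt (hx : x < e) (hy : y < e) : ofTConorm e S x y = ⊥ :=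
  if_pos ⟨hx, hy⟩

theorem ofTConorm_of_lt_of_not_lt (hx : x < e) (hy : ¬ y < e) :
    ofTConorm e S x y = x ⊓ y := by
  rw [ofTConorm, if_neg fun h => hy h.2, if_neg fun h => hx.not_ge h.1,
    if_neg fun h => hx.not_ge h.1, if_neg fun h => h.1.1 hx.le]

theorem ofTConorm_of_incompRel (hx : IncompRel (· ≤ ·) x e) (hy : IncompRel (· ≤ ·) y e) :
    ofTConorm e S x y = x ⊓ y := by
  rw [ofTConorm, if_neg fun h => hx.1 h.1.le, if_neg fun h => hx.2 h.1,
    if_neg fun h => hx.2 h.1, if_neg fun h => hy.2 h.2]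

/-- For `w = y ⊓ z < e`: `U (U w y) z = U w z = w`, whereas `U w (U y z) = U w w = ⊥`. -/
theorem inf_eq_bot_of_assoc (hassoc : ∀ x y z,
      ofTConorm e S (ofTConorm e S x y) z = ofTConorm e S x (ofTConorm e S y z))
    (hy : IncompRel (· ≤ ·) y e) (hz : IncompRel (· ≤ ·) z e) (hyz : y ⊓ z < e) :
    y ⊓ z = ⊥ := by
  have := hassoc (y ⊓ z) y z
  rwa [ofTConorm_of_lt_of_not_lt hyz (fun h => hy.1 h.le), inf_right_comm, inf_idem,
    ofTConorm_of_lt_of_not_lt hyz (fun h => hz.1 h.le), inf_assoc, inf_idem,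
    ofTConorm_of_incompRel hy hz, ofTConorm_of_lt_of_lt hyz hyz] at this

end Uninorm

open Classical in
theorem stmt0_general {L : Type*} [Lattice L] [BoundedOrder L] (e : L)
    (S : L → L → L)
    (U : L → L → L)
    (hU : ∀ x y, U x y =
      if x < e ∧ y < e then (⊥ : L)
      else if e ≤ x ∧ e ≤ y then S x y
      else if e ≤ x ∧ (¬ y ≤ e ∧ ¬ e ≤ y) then y
      else if (¬ x ≤ e ∧ ¬ e ≤ x) ∧ e ≤ y then x
      else x ⊓ y)
    (hassoc : ∀ x y z, U (U x y) z = U x (U y z)) :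
    (∀ y z, (¬ y ≤ e ∧ ¬ e ≤ y) → (¬ z ≤ e ∧ ¬ e ≤ z) →
      (¬ y ⊓ z ≤ e ∧ ¬ e ≤ y ⊓ z) ∨ y ⊓ z = ⊥) := by
  obtain rfl : U = Uninorm.ofTConorm e S := funext fun x => funext (hU x)
  intro y z hy hz
  have not_ge : ¬ e ≤ y ⊓ z := fun h => hy.2 (h.trans inf_le_left)
  by_cases hle : y ⊓ z ≤ e
  · exact .inr (Uninorm.inf_eq_bot_of_assoc hassoc hy hz (hle.lt_of_not_ge not_ge))
  · exact .inl ⟨hle, not_ge⟩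

open Classical in
theorem stmt0 {L : Type*} [Lattice L] [BoundedOrder L] (e : L)
    (he0 : e ≠ ⊥) (he1 : e ≠ ⊤)
    (S : L → L → L)
    (hScl : ∀ x y, e ≤ x → e ≤ y → e ≤ S x y)
    (hScomm : ∀ x y, e ≤ x → e ≤ y → S x y = S y x)
    (hSassoc : ∀ x y z, e ≤ x → e ≤ y → e ≤ z → S (S x y) z = S x (S y z))
    (hSmono : ∀ x y z, e ≤ x → e ≤ y → e ≤ z → x ≤ y → S x z ≤ S y z)
    (hSe : ∀ x, e ≤ x → S e x = x ∧ S x e = x)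
    (U : L → L → L)
    (hU : ∀ x y, U x y =
      if x < e ∧ y < e then (⊥ : L)
      else if e ≤ x ∧ e ≤ y then S x y
      else if e ≤ x ∧ (¬ y ≤ e ∧ ¬ e ≤ y) then y
      else if (¬ x ≤ e ∧ ¬ e ≤ x) ∧ e ≤ y then x
      else x ⊓ y)
    (hassoc : ∀ x y z, U (U x y) z = U x (U y z)) :
    (∀ y z, (¬ y ≤ e ∧ ¬ e ≤ y) → (¬ z ≤ e ∧ ¬ e ≤ z) →
      (¬ y ⊓ z ≤ e ∧ ¬ e ≤ y ⊓ z) ∨ y ⊓ z = ⊥) :=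
  stmt0_general e S U hU hassoc
end

section
/- Let $(L,\leq,0,1)$ be a bounded lattice, $e\in L\setminus\{0,1\}$, and $I_e=\{x\in L: x\parallel e\}$. Suppose that for all $y,z\in I_e$, either $y\wedge z\in I_e$ or $y\wedge z=0$. Let $S_e$ be a t-conorm on $[e,1]$ and define $U_S(x,y)=0$ if $(x,y)\in[0,e)^2$; $S_e(x,y)$ if $(x,y)\in[e,1]^2$; $y$ if $(x,y)\in[e,1]\times I_e$; $x$ if $(x,y)\in I_e\times[e,1]$; and $x\wedge y$ otherwise. Then $U_S$ is a uninorm on $L$ with neutral element $e$. -/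
/-!
Split `L` into `A = {x | ¬ e ≤ x}` and `B = [e, ⊤]`. On `B` the operation is `S`, an element
of `B` acts as the identity on `A`, and `A` is closed under the operation, which there is the
meet truncated to `⊥` on `[⊥, e)²`. Everything then reduces to `S` on `B` and to the truncated
meet on `A`. The latter is associative because both bracketings of `x, y, z` equal `⊥` when
two of them lie below `e`, and `x ⊓ y ⊓ z` otherwise; the hypothesis on `I_e` is exactly what
makes this hold when `x, y ∥ e` and `z < e`.
-/

section TConorm

variable {L : Type*} [Preorder L]

structure IsTConormOnIci (e : L) (S : L → L → L) : Prop where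
  le_apply : ∀ x y, e ≤ x → e ≤ y → e ≤ S x y
  comm : ∀ x y, e ≤ x → e ≤ y → S x y = S y x
  assoc : ∀ x y z, e ≤ x → e ≤ y → e ≤ z → S (S x y) z = S x (S y z)
  mono_left : ∀ x y z, e ≤ x → e ≤ y → e ≤ z → x ≤ y → S x z ≤ S y z
  apply_self_left : ∀ x, e ≤ x → S e x = x
  apply_self_right : ∀ x, e ≤ x → S x e = x

namespace IsTConormOnIci

variable {e : L} {S : L → L → L}

theorem le_apply_left (hS : IsTConormOnIci e S) {x y : L} (hx : e ≤ x) (hy : e ≤ y) :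
    x ≤ S x y :=
  calc x = S e x := (hS.apply_self_left x hx).symm
    _ ≤ S y x := hS.mono_left e y x le_rfl hy hx hy
    _ = S x y := hS.comm y x hy hx

end IsTConormOnIci

end TConorm

section TruncInf

variable {L : Type*} [Lattice L] [BoundedOrder L] (e : L)

def IncompInfOrBot : Prop :=
  ∀ y z, (¬ y ≤ e ∧ ¬ e ≤ y) → (¬ z ≤ e ∧ ¬ e ≤ z) →
    (¬ y ⊓ z ≤ e ∧ ¬ e ≤ y ⊓ z) ∨ y ⊓ z = ⊥

open Classical in
noncomputable def truncInf (x y : L) : L :=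
  if x < e ∧ y < e then ⊥ else x ⊓ y

variable {e}

open Classical in
theorem truncInf_comm (x y : L) : truncInf e x y = truncInf e y x := by
  simp only [truncInf, inf_comm x y]
  exact if_congr and_comm rfl rfl

theorem truncInf_le_left (x y : L) : truncInf e x y ≤ x := by
  unfold truncInf
  split_ifs
  exacts [bot_le, inf_le_left]

theorem truncInf_le_right (x y : L) : truncInf e x y ≤ y :=
  truncInf_comm x y ▸ truncInf_le_left y x

theorem not_le_truncInf {x : L} (hx : ¬ e ≤ x) (y : L) : ¬ e ≤ truncInf e x y :=
  fun h => hx (h.trans (truncInf_le_left x y))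

theorem truncInf_mono_left {x y : L} (hxy : x ≤ y) (z : L) :
    truncInf e x z ≤ truncInf e y z := by
  unfold truncInf
  split_ifs with hx hy hy
  · exact le_rfl
  · exact bot_le
  · exact absurd ⟨hxy.trans_lt hy.1, hy.2⟩ hx
  · exact inf_le_inf_right z hxy

open Classical in
theorem truncInf_truncInf
    (hcond : IncompInfOrBot e)
    {x y : L} (hx : ¬ e ≤ x) (hy : ¬ e ≤ y) (z : L) :
    truncInf e (truncInf e x y) z =
      if (x < e ∧ y < e) ∨ (x < e ∧ z < e) ∨ (y < e ∧ z < e) then ⊥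
      else x ⊓ y ⊓ z := by
  by_cases hxy : x < e ∧ y < e
  · simp [truncInf, hxy]
  rw [show truncInf e x y = x ⊓ y from if_neg hxy, truncInf]
  by_cases hz : z < e
  swap
  · simp [hz, hxy]
  simp only [hz, and_true, hxy, false_or]
  by_cases hlt : x < e ∨ y < e
  · have : x ⊓ y < e := hlt.elim inf_le_left.trans_lt inf_le_right.trans_lt
    simp [this, hlt]
  rw [if_neg hlt]
  have hxI : ¬ x ≤ e := fun h => hlt (.inl (h.lt_of_ne fun h' => hx h'.ge))
  have hyI : ¬ y ≤ e := fun h => hlt (.inr (h.lt_of_ne fun h' => hy h'.ge))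
  rcases hcond x y ⟨hxI, hx⟩ ⟨hyI, hy⟩ with hI | hbot
  · exact if_neg fun h => hI.1 h.le
  · simp [hbot]

theorem truncInf_assoc
    (hcond : IncompInfOrBot e)
    {x y z : L} (hx : ¬ e ≤ x) (hy : ¬ e ≤ y) (hz : ¬ e ≤ z) :
    truncInf e (truncInf e x y) z = truncInf e x (truncInf e y z) := by
  rw [truncInf_truncInf hcond hx hy, truncInf_comm x, truncInf_truncInf hcond hy hz,
    inf_comm (y ⊓ z), ← inf_assoc]
  congr 1
  exact propext (by tauto)

end TruncInf

section UninormOfTConorm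

variable {L : Type*} [Lattice L] [BoundedOrder L] (e : L) (S : L → L → L)

open Classical in
noncomputable def uninormOfTConorm (x y : L) : L :=
  if x < e ∧ y < e then ⊥
  else if e ≤ x ∧ e ≤ y then S x y
  else if e ≤ x ∧ (¬ y ≤ e ∧ ¬ e ≤ y) then y
  else if (¬ x ≤ e ∧ ¬ e ≤ x) ∧ e ≤ y then x
  else x ⊓ y

variable {e S} {x y : L}

theorem uninormOfTConorm_of_le_of_le (hx : e ≤ x) (hy : e ≤ y) :
    uninormOfTConorm e S x y = S x y := by
  simp [uninormOfTConorm, hx, hy, hx.not_gt]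

theorem uninormOfTConorm_of_le_of_not_le (hx : e ≤ x) (hy : ¬ e ≤ y) :
    uninormOfTConorm e S x y = y := by
  by_cases hye : y ≤ e
  · simp [uninormOfTConorm, hx, hy, hye, hx.not_gt, hye.trans hx]
  · simp [uninormOfTConorm, hx, hy, hye, hx.not_gt]

theorem uninormOfTConorm_of_not_le_of_le (hx : ¬ e ≤ x) (hy : e ≤ y) :
    uninormOfTConorm e S x y = x := by
  by_cases hxe : x ≤ e
  · simp [uninormOfTConorm, hx, hy, hxe, hy.not_gt, hxe.trans hy]
  · simp [uninormOfTConorm, hx, hy, hxe, hy.not_gt]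

theorem uninormOfTConorm_of_not_le_of_not_le (hx : ¬ e ≤ x) (hy : ¬ e ≤ y) :
    uninormOfTConorm e S x y = truncInf e x y := by
  simp [uninormOfTConorm, truncInf, hx, hy]

theorem uninormOfTConorm_comm (hS : IsTConormOnIci e S) (x y : L) :
    uninormOfTConorm e S x y = uninormOfTConorm e S y x := by
  by_cases hx : e ≤ x <;> by_cases hy : e ≤ y
  · rw [uninormOfTConorm_of_le_of_le hx hy, uninormOfTConorm_of_le_of_le hy hx,
      hS.comm x y hx hy]
  · rw [uninormOfTConorm_of_le_of_not_le hx hy, uninormOfTConorm_of_not_le_of_le hy hx]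
  · rw [uninormOfTConorm_of_not_le_of_le hx hy, uninormOfTConorm_of_le_of_not_le hy hx]
  · rw [uninormOfTConorm_of_not_le_of_not_le hx hy, uninormOfTConorm_of_not_le_of_not_le hy hx,
      truncInf_comm]

theorem uninormOfTConorm_self_left (hS : IsTConormOnIci e S) (x : L) :
    uninormOfTConorm e S e x = x := by
  by_cases hx : e ≤ x
  · rw [uninormOfTConorm_of_le_of_le le_rfl hx, hS.apply_self_left x hx]
  · exact uninormOfTConorm_of_le_of_not_le le_rfl hx

theorem uninormOfTConorm_self_right (hS : IsTConormOnIci e S) (x : L) :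
    uninormOfTConorm e S x e = x := by
  rw [uninormOfTConorm_comm hS, uninormOfTConorm_self_left hS]

theorem uninormOfTConorm_mono_left (hS : IsTConormOnIci e S) (hxy : x ≤ y) (z : L) :
    uninormOfTConorm e S x z ≤ uninormOfTConorm e S y z := by
  by_cases hz : e ≤ z <;> by_cases hy : e ≤ y
  · by_cases hx : e ≤ x
    · rw [uninormOfTConorm_of_le_of_le hx hz, uninormOfTConorm_of_le_of_le hy hz]
      exact hS.mono_left x y z hx hy hz hxy
    · rw [uninormOfTConorm_of_not_le_of_le hx hz, uninormOfTConorm_of_le_of_le hy hz]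
      exact hxy.trans (hS.le_apply_left hy hz)
  · have hx : ¬ e ≤ x := fun hx => hy (hx.trans hxy)
    rwa [uninormOfTConorm_of_not_le_of_le hx hz, uninormOfTConorm_of_not_le_of_le hy hz]
  · by_cases hx : e ≤ x
    · rw [uninormOfTConorm_of_le_of_not_le hx hz, uninormOfTConorm_of_le_of_not_le hy hz]
    · rw [uninormOfTConorm_of_not_le_of_not_le hx hz, uninormOfTConorm_of_le_of_not_le hy hz]
      exact truncInf_le_right x z
  · have hx : ¬ e ≤ x := fun hx => hy (hx.trans hxy)
    rw [uninormOfTConorm_of_not_le_of_not_le hx hz, uninormOfTConorm_of_not_le_of_not_le hy hz]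
    exact truncInf_mono_left hxy z

theorem uninormOfTConorm_mono_right (hS : IsTConormOnIci e S) (hxy : x ≤ y) (z : L) :
    uninormOfTConorm e S z x ≤ uninormOfTConorm e S z y := by
  rw [uninormOfTConorm_comm hS z, uninormOfTConorm_comm hS z]
  exact uninormOfTConorm_mono_left hS hxy z

theorem uninormOfTConorm_assoc (hS : IsTConormOnIci e S)
    (hcond : IncompInfOrBot e) (x y z : L) :
    uninormOfTConorm e S (uninormOfTConorm e S x y) z =
      uninormOfTConorm e S x (uninormOfTConorm e S y z) := by
  by_cases hx : e ≤ x <;> by_cases hy : e ≤ y <;> by_cases hz : e ≤ z <;>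
    simp only [uninormOfTConorm_of_le_of_le, uninormOfTConorm_of_le_of_not_le,
      uninormOfTConorm_of_not_le_of_le, uninormOfTConorm_of_not_le_of_not_le, hx, hy, hz,
      hS.le_apply, not_le_truncInf, not_false_eq_true, hS.assoc, truncInf_assoc hcond]

end UninormOfTConorm

open Classical in
theorem stmt1_general {L : Type*} [Lattice L] [BoundedOrder L] (e : L)
    (S : L → L → L)
    (hScl : ∀ x y, e ≤ x → e ≤ y → e ≤ S x y)
    (hScomm : ∀ x y, e ≤ x → e ≤ y → S x y = S y x)
    (hSassoc : ∀ x y z, e ≤ x → e ≤ y → e ≤ z → S (S x y) z = S x (S y z))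
    (hSmono : ∀ x y z, e ≤ x → e ≤ y → e ≤ z → x ≤ y → S x z ≤ S y z)
    (hSe : ∀ x, e ≤ x → S e x = x ∧ S x e = x)
    (U : L → L → L)
    (hU : ∀ x y, U x y =
      if x < e ∧ y < e then (⊥ : L)
      else if e ≤ x ∧ e ≤ y then S x y
      else if e ≤ x ∧ (¬ y ≤ e ∧ ¬ e ≤ y) then y
      else if (¬ x ≤ e ∧ ¬ e ≤ x) ∧ e ≤ y then x
      else x ⊓ y)
    (hcond : (∀ y z, (¬ y ≤ e ∧ ¬ e ≤ y) → (¬ z ≤ e ∧ ¬ e ≤ z) →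
      (¬ y ⊓ z ≤ e ∧ ¬ e ≤ y ⊓ z) ∨ y ⊓ z = ⊥)) :
    ((∀ x y, U x y = U y x) ∧
      (∀ x y z, U (U x y) z = U x (U y z)) ∧
      (∀ x y z, x ≤ y → U x z ≤ U y z ∧ U z x ≤ U z y) ∧
      (∀ x, U e x = x ∧ U x e = x)) := by
  obtain rfl : U = uninormOfTConorm e S := funext fun x => funext (hU x)
  have hS : IsTConormOnIci e S := ⟨hScl, hScomm, hSassoc, hSmono,
    fun x hx => (hSe x hx).1, fun x hx => (hSe x hx).2⟩
  refine ⟨uninormOfTConorm_comm hS, uninormOfTConorm_assoc hS hcond,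
    fun x y z hxy =>
      ⟨uninormOfTConorm_mono_left hS hxy z, uninormOfTConorm_mono_right hS hxy z⟩,
    fun x => ⟨uninormOfTConorm_self_left hS x, uninormOfTConorm_self_right hS x⟩⟩

open Classical in
theorem stmt1 {L : Type*} [Lattice L] [BoundedOrder L] (e : L)
    (he0 : e ≠ ⊥) (he1 : e ≠ ⊤)
    (S : L → L → L)
    (hScl : ∀ x y, e ≤ x → e ≤ y → e ≤ S x y)
    (hScomm : ∀ x y, e ≤ x → e ≤ y → S x y = S y x)
    (hSassoc : ∀ x y z, e ≤ x → e ≤ y → e ≤ z → S (S x y) z = S x (S y z))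
    (hSmono : ∀ x y z, e ≤ x → e ≤ y → e ≤ z → x ≤ y → S x z ≤ S y z)
    (hSe : ∀ x, e ≤ x → S e x = x ∧ S x e = x)
    (U : L → L → L)
    (hU : ∀ x y, U x y =
      if x < e ∧ y < e then (⊥ : L)
      else if e ≤ x ∧ e ≤ y then S x y
      else if e ≤ x ∧ (¬ y ≤ e ∧ ¬ e ≤ y) then y
      else if (¬ x ≤ e ∧ ¬ e ≤ x) ∧ e ≤ y then x
      else x ⊓ y)
    (hcond : (∀ y z, (¬ y ≤ e ∧ ¬ e ≤ y) → (¬ z ≤ e ∧ ¬ e ≤ z) →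
      (¬ y ⊓ z ≤ e ∧ ¬ e ≤ y ⊓ z) ∨ y ⊓ z = ⊥)) :
    ((∀ x y, U x y = U y x) ∧
      (∀ x y z, U (U x y) z = U x (U y z)) ∧
      (∀ x y z, x ≤ y → U x z ≤ U y z ∧ U z x ≤ U z y) ∧
      (∀ x, U e x = x ∧ U x e = x)) :=
  stmt1_general e S hScl hScomm hSassoc hSmono hSe U hU hcond
end

section
/- Let $(L,\leq,0,1)$ be a bounded lattice, $e\in L\setminus\{0,1\}$, $I_e=\{x: x\parallel e\}$, and let $S_e$ be a t-conorm on $[e,1]$. Define $U_S$ by: $0$ on $[0,e)^2$; $S_e(x,y)$ on $[e,1]^2$; $y$ on $[e,1]\times I_e$; $x$ on $I_e\times[e,1]$; $x\wedge y$ otherwise. Then $U_S$ is a uninorm on $L$ with neutral element $e$ if and only if $\{y\wedge z : y,z\in I_e\}\subseteq I_e\cup\{0\}$. -/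
/-!
Split `L` into the interval `[e,1]` and its complement `L ∖ [e,1] = [0,e) ∪ I_e`. On `[e,1]` the
operation `U_S` is `S_e`, elements of `[e,1]` act as the identity on the complement, and on the
complement `U_S` is `x ⊓ y`, except that it is `0` on `[0,e)²`. An operation glued in this way is
commutative and monotone with neutral element `e` under mild conditions on the two pieces, and,
each piece being closed, it is associative iff both pieces are. The lower piece fails associativity
exactly at the triples `(y, z, y ⊓ z)` with `y, z ∈ I_e` and `0 ≠ y ⊓ z < e`: there
`U(U(y, z), y ⊓ z) = U(y ⊓ z, y ⊓ z) = 0`, while `U(y, U(z, y ⊓ z)) = y ⊓ z`.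
-/

section Glue

variable {α : Type*} {P : α → Prop} [DecidablePred P] {S V : α → α → α}

def glueOp (P : α → Prop) [DecidablePred P] (S V : α → α → α) (x y : α) : α :=
  if P x then (if P y then S x y else y) else (if P y then x else V x y)

theorem glueOp_comm (hS : ∀ x y, P x → P y → S x y = S y x)
    (hV : ∀ x y, ¬ P x → ¬ P y → V x y = V y x) (x y : α) :
    glueOp P S V x y = glueOp P S V y x := by
  unfold glueOp
  by_cases hx : P x <;> by_cases hy : P y <;> simp [hx, hy, hS, hV]

theorem glueOp_neutral {e : α} (he : P e) (hS : ∀ x, P x → S e x = x ∧ S x e = x) (x : α) :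
    glueOp P S V e x = x ∧ glueOp P S V x e = x := by
  unfold glueOp
  by_cases hx : P x <;> simp [he, hx, hS]

theorem glueOp_assoc_iff (hSP : ∀ x y, P x → P y → P (S x y))
    (hVP : ∀ x y, ¬ P x → ¬ P y → ¬ P (V x y))
    (hS : ∀ x y z, P x → P y → P z → S (S x y) z = S x (S y z)) :
    (∀ x y z, glueOp P S V (glueOp P S V x y) z = glueOp P S V x (glueOp P S V y z)) ↔
      ∀ x y z, ¬ P x → ¬ P y → ¬ P z → V (V x y) z = V x (V y z) := by
  constructor
  · intro h x y z hx hy hz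
    simpa [glueOp, hx, hy, hz, hVP x y hx hy, hVP y z hy hz] using h x y z
  · intro hV x y z
    unfold glueOp
    by_cases hx : P x <;> by_cases hy : P y <;> by_cases hz : P z <;>
      simp [hx, hy, hz, hSP, hVP, hS, hV]

theorem glueOp_monotone_left [Preorder α] (hP : Monotone P)
    (hSmono : ∀ x y z, P x → P y → P z → x ≤ y → S x z ≤ S y z)
    (hSle : ∀ y z, P y → P z → y ≤ S y z)
    (hVmono : ∀ x y z, ¬ P x → ¬ P y → ¬ P z → x ≤ y → V x z ≤ V y z)
    (hVle : ∀ x z, ¬ P x → ¬ P z → V x z ≤ z) (z : α) :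
    Monotone (glueOp P S V · z) := by
  intro x y hxy
  by_cases hy : P y
  · by_cases hx : P x
    · by_cases hz : P z
      · simpa [glueOp, hx, hy, hz] using hSmono x y z hx hy hz hxy
      · simp [glueOp, hx, hy, hz]
    · by_cases hz : P z
      · simpa [glueOp, hx, hy, hz] using hxy.trans (hSle y z hy hz)
      · simpa [glueOp, hx, hy, hz] using hVle x z hx hz
  · have hx : ¬ P x := fun hx => hy (hP hxy hx)
    by_cases hz : P z
    · simpa [glueOp, hx, hy, hz] using hxy
    · simpa [glueOp, hx, hy, hz] using hVmono x y z hx hy hz hxy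

end Glue

section InfBotBelow

variable {L : Type*} [Lattice L] [OrderBot L] {e x y z : L}

open Classical in
noncomputable def infBotBelow (e x y : L) : L := if x < e ∧ y < e then ⊥ else x ⊓ y

theorem infBotBelow_comm (x y : L) : infBotBelow e x y = infBotBelow e y x := by
  unfold infBotBelow
  rw [inf_comm]
  congr 1
  exact propext and_comm

theorem infBotBelow_le_inf : infBotBelow e x y ≤ x ⊓ y := by
  unfold infBotBelow; split_ifs <;> simp

theorem infBotBelow_mono_left (hxy : x ≤ y) : infBotBelow e x z ≤ infBotBelow e y z := by
  by_cases h : y < e ∧ z < e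
  · simp [infBotBelow, h, hxy.trans_lt h.1]
  · simpa [infBotBelow, h] using infBotBelow_le_inf.trans (inf_le_inf_right z hxy)

theorem not_le_infBotBelow (hx : ¬ e ≤ x) : ¬ e ≤ infBotBelow e x y := by
  unfold infBotBelow
  split_ifs with h
  · exact fun he => hx (he.trans bot_le)
  · exact fun he => hx (he.trans inf_le_left)

theorem infBotBelow_of_lt (hx : x < e) (hy : y < e) : infBotBelow e x y = ⊥ := by
  simp [infBotBelow, hx, hy]

theorem infBotBelow_of_not_lt_left (hx : ¬ x < e) : infBotBelow e x y = x ⊓ y := by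
  simp [infBotBelow, hx]

theorem infBotBelow_of_not_lt_right (hy : ¬ y < e) : infBotBelow e x y = x ⊓ y := by
  simp [infBotBelow, hy]

@[simp]
theorem infBotBelow_bot_left : infBotBelow e ⊥ y = ⊥ := by
  simp [infBotBelow]

@[simp]
theorem infBotBelow_bot_right : infBotBelow e x ⊥ = ⊥ := by
  simp [infBotBelow]

theorem infBotBelow_inf_of_incompRel (h : IncompRel (· ≤ ·) (y ⊓ z) e ∨ y ⊓ z = ⊥) :
    infBotBelow e x (y ⊓ z) = x ⊓ (y ⊓ z) := by
  rcases h with h | h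
  · exact infBotBelow_of_not_lt_right h.not_lt
  · simp [h]

theorem inf_eq_bot_of_infBotBelow_assoc (hy : IncompRel (· ≤ ·) y e)
    (hz : IncompRel (· ≤ ·) z e) (hyz : y ⊓ z < e)
    (h : infBotBelow e (infBotBelow e y z) (y ⊓ z) = infBotBelow e y (infBotBelow e z (y ⊓ z))) :
    y ⊓ z = ⊥ := by
  simpa [infBotBelow_of_not_lt_left hy.not_lt, infBotBelow_of_not_lt_left hz.not_lt,
    infBotBelow_of_lt hyz hyz, eq_comm] using h

theorem infBotBelow_assoc
    (h : ∀ y z : L, IncompRel (· ≤ ·) y e → IncompRel (· ≤ ·) z e →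
      IncompRel (· ≤ ·) (y ⊓ z) e ∨ y ⊓ z = ⊥)
    (hx : ¬ e ≤ x) (hy : ¬ e ≤ y) (hz : ¬ e ≤ z) :
    infBotBelow e (infBotBelow e x y) z = infBotBelow e x (infBotBelow e y z) := by
  rcases not_le_iff_lt_or_incompRel.1 hx with hx | hx <;>
  rcases not_le_iff_lt_or_incompRel.1 hy with hy | hy <;>
  rcases not_le_iff_lt_or_incompRel.1 hz with hz | hz
  · rw [infBotBelow_of_lt hx hy, infBotBelow_of_lt hy hz, infBotBelow_bot_left,
      infBotBelow_bot_right]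
  · rw [infBotBelow_of_lt hx hy, infBotBelow_bot_left, infBotBelow_of_not_lt_right hz.not_lt,
      infBotBelow_of_lt hx (inf_le_left.trans_lt hy)]
  · rw [infBotBelow_of_not_lt_right hy.not_lt, infBotBelow_of_not_lt_left hy.not_lt,
      infBotBelow_of_lt (inf_le_left.trans_lt hx) hz,
      infBotBelow_of_lt hx (inf_le_right.trans_lt hz)]
  · rw [infBotBelow_of_not_lt_right hy.not_lt, infBotBelow_of_not_lt_right hz.not_lt,
      infBotBelow_of_not_lt_right hz.not_lt, infBotBelow_inf_of_incompRel (h y z hy hz),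
      inf_assoc]
  · rw [infBotBelow_of_not_lt_left hx.not_lt, infBotBelow_of_lt hy hz, infBotBelow_bot_right,
      infBotBelow_of_lt (inf_le_right.trans_lt hy) hz]
  · rw [infBotBelow_of_not_lt_left hx.not_lt, infBotBelow_of_not_lt_right hz.not_lt,
      infBotBelow_of_not_lt_right hz.not_lt, infBotBelow_of_not_lt_left hx.not_lt, inf_assoc]
  · rw [infBotBelow_of_not_lt_left hx.not_lt, infBotBelow_of_not_lt_left hy.not_lt,
      infBotBelow_of_not_lt_left hx.not_lt, infBotBelow_comm _ z,
      infBotBelow_inf_of_incompRel (h x y hx hy), inf_comm z, inf_assoc]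
  · rw [infBotBelow_of_not_lt_left hx.not_lt, infBotBelow_of_not_lt_left hy.not_lt,
      infBotBelow_of_not_lt_right hz.not_lt, infBotBelow_of_not_lt_left hx.not_lt, inf_assoc]

theorem infBotBelow_assoc_iff :
    (∀ x y z : L, ¬ e ≤ x → ¬ e ≤ y → ¬ e ≤ z →
      infBotBelow e (infBotBelow e x y) z = infBotBelow e x (infBotBelow e y z)) ↔
    ∀ y z : L, IncompRel (· ≤ ·) y e → IncompRel (· ≤ ·) z e →
      IncompRel (· ≤ ·) (y ⊓ z) e ∨ y ⊓ z = ⊥ := by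
  refine ⟨fun h y z hy hz => or_iff_not_imp_left.2 fun hyz => ?_,
    fun h _ _ _ => infBotBelow_assoc h⟩
  have hyz : y ⊓ z < e := (not_le_iff_lt_or_incompRel.1
    fun he : e ≤ y ⊓ z => hy.2 (he.trans inf_le_left)).resolve_right hyz
  exact inf_eq_bot_of_infBotBelow_assoc hy hz hyz (h y z (y ⊓ z) hy.2 hz.2 hyz.not_ge)

end InfBotBelow

open Classical in
theorem stmt2_general {L : Type*} [Lattice L] [BoundedOrder L] (e : L)
    (S : L → L → L)
    (hScl : ∀ x y, e ≤ x → e ≤ y → e ≤ S x y)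
    (hScomm : ∀ x y, e ≤ x → e ≤ y → S x y = S y x)
    (hSassoc : ∀ x y z, e ≤ x → e ≤ y → e ≤ z → S (S x y) z = S x (S y z))
    (hSmono : ∀ x y z, e ≤ x → e ≤ y → e ≤ z → x ≤ y → S x z ≤ S y z)
    (hSe : ∀ x, e ≤ x → S e x = x ∧ S x e = x)
    (U : L → L → L)
    (hU : ∀ x y, U x y =
      if x < e ∧ y < e then (⊥ : L)
      else if e ≤ x ∧ e ≤ y then S x y
      else if e ≤ x ∧ (¬ y ≤ e ∧ ¬ e ≤ y) then y
      else if (¬ x ≤ e ∧ ¬ e ≤ x) ∧ e ≤ y then x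
      else x ⊓ y) :
    ((∀ x y, U x y = U y x) ∧
      (∀ x y z, U (U x y) z = U x (U y z)) ∧
      (∀ x y z, x ≤ y → U x z ≤ U y z ∧ U z x ≤ U z y) ∧
      (∀ x, U e x = x ∧ U x e = x)) ↔
    (∀ y z, (¬ y ≤ e ∧ ¬ e ≤ y) → (¬ z ≤ e ∧ ¬ e ≤ z) →
      (¬ y ⊓ z ≤ e ∧ ¬ e ≤ y ⊓ z) ∨ y ⊓ z = ⊥) := by
  obtain rfl : U = glueOp (e ≤ ·) S (infBotBelow e) := by
    funext x y
    rw [hU]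
    by_cases hx : e ≤ x <;> by_cases hy : e ≤ y
    · simp [glueOp, hx, hy, hx.not_gt]
    · simpa [glueOp, hx, hy, hx.not_gt] using fun h : y ≤ e => h.trans hx
    · simpa [glueOp, hx, hy, hy.not_gt] using fun h : x ≤ e => h.trans hy
    · simp [glueOp, infBotBelow, hx, hy]
  have hP : Monotone (e ≤ ·) := fun _ _ hxy hx => hx.trans hxy
  have hSle : ∀ y z, e ≤ y → e ≤ z → y ≤ S y z := fun y z hy hz =>
    calc y = S e y := (hSe y hy).1.symm
      _ ≤ S z y := hSmono e z y le_rfl hz hy hz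
      _ = S y z := hScomm z y hz hy
  have hcomm := glueOp_comm hScomm fun x y _ _ => infBotBelow_comm (e := e) x y
  have hmono := glueOp_monotone_left (V := infBotBelow e) hP hSmono hSle
    (fun _ _ _ _ _ _ => infBotBelow_mono_left)
    (fun _ _ _ _ => infBotBelow_le_inf.trans inf_le_right)
  rw [glueOp_assoc_iff hScl (fun _ _ hx _ => not_le_infBotBelow hx) hSassoc, infBotBelow_assoc_iff]
  refine ⟨fun h => h.2.1, fun h => ⟨hcomm, h, fun x y z hxy => ⟨hmono z hxy, ?_⟩,
    glueOp_neutral le_rfl hSe⟩⟩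
  rw [hcomm z x, hcomm z y]
  exact hmono z hxy

open Classical in
theorem stmt2 {L : Type*} [Lattice L] [BoundedOrder L] (e : L)
    (he0 : e ≠ ⊥) (he1 : e ≠ ⊤)
    (S : L → L → L)
    (hScl : ∀ x y, e ≤ x → e ≤ y → e ≤ S x y)
    (hScomm : ∀ x y, e ≤ x → e ≤ y → S x y = S y x)
    (hSassoc : ∀ x y z, e ≤ x → e ≤ y → e ≤ z → S (S x y) z = S x (S y z))
    (hSmono : ∀ x y z, e ≤ x → e ≤ y → e ≤ z → x ≤ y → S x z ≤ S y z)
    (hSe : ∀ x, e ≤ x → S e x = x ∧ S x e = x)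
    (U : L → L → L)
    (hU : ∀ x y, U x y =
      if x < e ∧ y < e then (⊥ : L)
      else if e ≤ x ∧ e ≤ y then S x y
      else if e ≤ x ∧ (¬ y ≤ e ∧ ¬ e ≤ y) then y
      else if (¬ x ≤ e ∧ ¬ e ≤ x) ∧ e ≤ y then x
      else x ⊓ y) :
    ((∀ x y, U x y = U y x) ∧
      (∀ x y z, U (U x y) z = U x (U y z)) ∧
      (∀ x y z, x ≤ y → U x z ≤ U y z ∧ U z x ≤ U z y) ∧
      (∀ x, U e x = x ∧ U x e = x)) ↔
    (∀ y z, (¬ y ≤ e ∧ ¬ e ≤ y) → (¬ z ≤ e ∧ ¬ e ≤ z) →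
      (¬ y ⊓ z ≤ e ∧ ¬ e ≤ y ⊓ z) ∨ y ⊓ z = ⊥) :=
  stmt2_general e S hScl hScomm hSassoc hSmono hSe U hU
end

section
/- Let $(L,\leq,0,1)$ be a bounded lattice, $e\in L\setminus\{0,1\}$, $I_e=\{x: x\parallel e\}$, and let $T_e$ be a t-norm on $[0,e]$. Define $U_t(x,y)=T_e(x,y)$ if $(x,y)\in[0,e]^2$; $x\vee y$ if $(x,y)\in([0,e]\times(e,1])\cup((e,1]\times[0,e])\cup(I_e\times I_e)$; $y$ if $(x,y)\in[0,e]\times I_e$; $x$ if $(x,y)\in I_e\times[0,e]$; and $1$ otherwise. If $U_t$ is associative, then for all $y,z\in I_e$, either $y\vee z\in I_e$ or $y\vee z=1$. -/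
open Classical in
theorem stmt4_general {L : Type*} [Lattice L] [BoundedOrder L] (e : L)
    (T : L → L → L)
    (U : L → L → L)
    (hU : ∀ x y, U x y =
      if x ≤ e ∧ y ≤ e then T x y
      else if (x ≤ e ∧ e < y) ∨ (e < x ∧ y ≤ e) ∨
          ((¬ x ≤ e ∧ ¬ e ≤ x) ∧ (¬ y ≤ e ∧ ¬ e ≤ y)) then x ⊔ y
      else if x ≤ e ∧ (¬ y ≤ e ∧ ¬ e ≤ y) then y
      else if (¬ x ≤ e ∧ ¬ e ≤ x) ∧ y ≤ e then x
      else (⊤ : L))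
    (hassoc : ∀ x y z, U (U x y) z = U x (U y z)) :
    (∀ y z, (¬ y ≤ e ∧ ¬ e ≤ y) → (¬ z ≤ e ∧ ¬ e ≤ z) →
      (¬ y ⊔ z ≤ e ∧ ¬ e ≤ y ⊔ z) ∨ y ⊔ z = ⊤) := by
  intro y z hy hz
  have hsup_not_le : ¬ y ⊔ z ≤ e := fun h => hy.1 (le_sup_left.trans h)
  by_cases he_le : e ≤ y ⊔ z
  · right
    have hUyz : U y z = y ⊔ z := by simp [hU, hy.1, hy.2, hz.1, hz.2]
    have hUzz : U z z = z := by simp [hU, hz.1, hz.2]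
    -- `(y ⊔ z, z) ∈ (e, ⊤] × I_e` is in the last, `⊤`, case of `U`
    have hUsup : U (y ⊔ z) z = ⊤ := by simp [hU, hsup_not_le, he_le, hz.1]
    calc y ⊔ z = U y (U z z) := by rw [hUzz, hUyz]
      _ = U (U y z) z := (hassoc y z z).symm
      _ = ⊤ := by rw [hUyz, hUsup]
  · exact Or.inl ⟨hsup_not_le, he_le⟩

open Classical in
theorem stmt4 {L : Type*} [Lattice L] [BoundedOrder L] (e : L)
    (he0 : e ≠ ⊥) (he1 : e ≠ ⊤)
    (T : L → L → L)
    (hTcl : ∀ x y, x ≤ e → y ≤ e → T x y ≤ e)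
    (hTcomm : ∀ x y, x ≤ e → y ≤ e → T x y = T y x)
    (hTassoc : ∀ x y z, x ≤ e → y ≤ e → z ≤ e → T (T x y) z = T x (T y z))
    (hTmono : ∀ x y z, x ≤ e → y ≤ e → z ≤ e → x ≤ y → T x z ≤ T y z)
    (hTe : ∀ x, x ≤ e → T e x = x ∧ T x e = x)
    (U : L → L → L)
    (hU : ∀ x y, U x y =
      if x ≤ e ∧ y ≤ e then T x y
      else if (x ≤ e ∧ e < y) ∨ (e < x ∧ y ≤ e) ∨
          ((¬ x ≤ e ∧ ¬ e ≤ x) ∧ (¬ y ≤ e ∧ ¬ e ≤ y)) then x ⊔ y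
      else if x ≤ e ∧ (¬ y ≤ e ∧ ¬ e ≤ y) then y
      else if (¬ x ≤ e ∧ ¬ e ≤ x) ∧ y ≤ e then x
      else (⊤ : L))
    (hassoc : ∀ x y z, U (U x y) z = U x (U y z)) :
    (∀ y z, (¬ y ≤ e ∧ ¬ e ≤ y) → (¬ z ≤ e ∧ ¬ e ≤ z) →
      (¬ y ⊔ z ≤ e ∧ ¬ e ≤ y ⊔ z) ∨ y ⊔ z = ⊤) :=
  stmt4_general e T U hU hassoc
end

section
/- Let $(L,\leq,0,1)$ be a bounded lattice, $e\in L\setminus\{0,1\}$, $I_e=\{x: x\parallel e\}$, and suppose that for all $y,z\in I_e$, either $y\vee z\in I_e$ or $y\vee z=1$. Let $T_e$ be a t-norm on $[0,e]$ and define $U_t(x,y)=T_e(x,y)$ on $[0,e]^2$; $x\vee y$ on $([0,e]\times(e,1])\cup((e,1]\times[0,e])\cup(I_e\times I_e)$; $y$ on $[0,e]\times I_e$; $x$ on $I_e\times[0,e]$; $1$ otherwise. Then $U_t$ is a uninorm on $L$ with neutral element $e$. -/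
/-!
Every element of `[0, e]` acts as the identity on the complement `N = L \ [0, e]`, and `N` is
closed under `U` because `⊤ ∈ N`. For such an operation associativity only has to be checked
inside `[0, e]`, where `U = T`, and inside `N`. On `I_e ∪ {⊤}` the operation `U` is `⊔`, and this
set is closed under `⊔` by the hypothesis on `I_e`; as soon as an argument lies in `(e, ⊤]`, all
products in `N` are `⊤`.
-/

local infix:50 " ∥ " => IncompRel (· ≤ ·)

structure IsTNormBelow {L : Type*} [LE L] (e : L) (T : L → L → L) : Prop where
  apply_le : ∀ x y, x ≤ e → y ≤ e → T x y ≤ e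
  comm : ∀ x y, x ≤ e → y ≤ e → T x y = T y x
  assoc : ∀ x y z, x ≤ e → y ≤ e → z ≤ e → T (T x y) z = T x (T y z)
  mono_left : ∀ x y z, x ≤ e → y ≤ e → z ≤ e → x ≤ y → T x z ≤ T y z
  neutral : ∀ x, x ≤ e → T e x = x ∧ T x e = x

theorem IsTNormBelow.apply_le_left {L : Type*} [Preorder L] {e : L} {T : L → L → L}
    (hT : IsTNormBelow e T) {x y : L} (hx : x ≤ e) (hy : y ≤ e) : T x y ≤ x :=
  calc T x y = T y x := hT.comm x y hx hy
    _ ≤ T e x := hT.mono_left y e x hy le_rfl hx hy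
    _ = x := (hT.neutral x hx).1

theorem assoc_of_trivial_action_on_compl {α : Type*} (op : α → α → α) (p : α → Prop)
    (hp : ∀ x y, p x → p y → p (op x y)) (hnp : ∀ x y, ¬ p x → ¬ p y → ¬ p (op x y))
    (hleft : ∀ a w, p a → ¬ p w → op a w = w) (hright : ∀ a w, p a → ¬ p w → op w a = w)
    (hassoc : ∀ x y z, p x → p y → p z → op (op x y) z = op x (op y z))
    (hassoc' : ∀ x y z, ¬ p x → ¬ p y → ¬ p z → op (op x y) z = op x (op y z))
    (x y z : α) : op (op x y) z = op x (op y z) := by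
  by_cases hx : p x <;> by_cases hy : p y <;> by_cases hz : p z
  · exact hassoc x y z hx hy hz
  · rw [hleft _ z (hp x y hx hy) hz, hleft y z hy hz, hleft x z hx hz]
  · rw [hleft x y hx hy, hright z y hz hy, hleft x y hx hy]
  · rw [hleft x y hx hy, hleft x _ hx (hnp y z hy hz)]
  · rw [hright y x hy hx, hright _ x (hp y z hy hz) hx, hright z x hz hx]
  · rw [hright y x hy hx, hleft y z hy hz]
  · rw [hright z _ hz (hnp x y hx hy), hright z y hz hy]
  · exact hassoc' x y z hx hy hz

theorem lt_or_incompRel_of_not_le {L : Type*} [Preorder L] {x e : L} (h : ¬ x ≤ e) :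
    e < x ∨ x ∥ e := by
  rw [incompRel_comm]
  exact not_le_iff_lt_or_incompRel.mp h

section

variable {L : Type*} [Lattice L] [BoundedOrder L]

open Classical in
/-- The paper's `U_t`, spelled as in the hypothesis `hU` of `stmt5` so that the two agree
definitionally. -/
noncomputable def uninormOfTNorm (e : L) (T : L → L → L) (x y : L) : L :=
  if x ≤ e ∧ y ≤ e then T x y
  else if (x ≤ e ∧ e < y) ∨ (e < x ∧ y ≤ e) ∨
      ((¬ x ≤ e ∧ ¬ e ≤ x) ∧ (¬ y ≤ e ∧ ¬ e ≤ y)) then x ⊔ y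
  else if x ≤ e ∧ (¬ y ≤ e ∧ ¬ e ≤ y) then y
  else if (¬ x ≤ e ∧ ¬ e ≤ x) ∧ y ≤ e then x
  else (⊤ : L)

variable {e : L} {T : L → L → L} {x y z : L}

theorem uninormOfTNorm_of_le_of_le (hx : x ≤ e) (hy : y ≤ e) :
    uninormOfTNorm e T x y = T x y := by
  simp [uninormOfTNorm, hx, hy]

theorem uninormOfTNorm_of_le_of_not_le (hx : x ≤ e) (hy : ¬ y ≤ e) :
    uninormOfTNorm e T x y = y := by
  rcases lt_or_incompRel_of_not_le hy with hy | hy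
  · simp [uninormOfTNorm, hx, hy, hy.not_ge, hx.trans hy.le]
  · simp [uninormOfTNorm, hx, hy.not_le, hy.not_ge, hy.not_gt]

theorem uninormOfTNorm_of_not_le_of_le (hx : ¬ x ≤ e) (hy : y ≤ e) :
    uninormOfTNorm e T x y = x := by
  rcases lt_or_incompRel_of_not_le hx with hx | hx
  · simp [uninormOfTNorm, hy, hx, hx.not_ge, hy.trans hx.le]
  · simp [uninormOfTNorm, hy, hx.not_le, hx.not_ge, hx.not_gt]

theorem uninormOfTNorm_of_incompRel_of_incompRel (hx : x ∥ e) (hy : y ∥ e) :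
    uninormOfTNorm e T x y = x ⊔ y := by
  simp [uninormOfTNorm, hx.not_le, hy.not_le, hx.not_ge, hy.not_ge]

theorem uninormOfTNorm_of_lt_of_not_le (hx : e < x) (hy : ¬ y ≤ e) :
    uninormOfTNorm e T x y = ⊤ := by
  simp [uninormOfTNorm, hx.not_ge, hy, hx.le]

theorem uninormOfTNorm_of_not_le_of_lt (hx : ¬ x ≤ e) (hy : e < y) :
    uninormOfTNorm e T x y = ⊤ := by
  simp [uninormOfTNorm, hy.not_ge, hx, hy.le]

theorem uninormOfTNorm_of_incompRel_or_top (he : e ≠ ⊤) (hx : x ∥ e ∨ x = ⊤)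
    (hy : y ∥ e ∨ y = ⊤) : uninormOfTNorm e T x y = x ⊔ y := by
  rcases hx with hx | rfl
  · rcases hy with hy | rfl
    · exact uninormOfTNorm_of_incompRel_of_incompRel hx hy
    · rw [uninormOfTNorm_of_not_le_of_lt hx.not_le he.lt_top, sup_top_eq]
  · have hy : ¬ y ≤ e := by rcases hy with hy | rfl; exacts [hy.not_le, he.lt_top.not_ge]
    rw [uninormOfTNorm_of_lt_of_not_le he.lt_top hy, top_sup_eq]

theorem not_uninormOfTNorm_le (he : e ≠ ⊤) (hx : ¬ x ≤ e) (hy : ¬ y ≤ e) :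
    ¬ uninormOfTNorm e T x y ≤ e := by
  rcases lt_or_incompRel_of_not_le hx with hx' | hx'
  · rw [uninormOfTNorm_of_lt_of_not_le hx' hy]; exact he.lt_top.not_ge
  rcases lt_or_incompRel_of_not_le hy with hy' | hy'
  · rw [uninormOfTNorm_of_not_le_of_lt hx hy']; exact he.lt_top.not_ge
  rw [uninormOfTNorm_of_incompRel_of_incompRel hx' hy']
  exact fun h => hx (le_sup_left.trans h)

theorem uninormOfTNorm_comm (hT : IsTNormBelow e T) (x y : L) :
    uninormOfTNorm e T x y = uninormOfTNorm e T y x := by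
  by_cases hx : x ≤ e <;> by_cases hy : y ≤ e
  · rw [uninormOfTNorm_of_le_of_le hx hy, uninormOfTNorm_of_le_of_le hy hx, hT.comm x y hx hy]
  · rw [uninormOfTNorm_of_le_of_not_le hx hy, uninormOfTNorm_of_not_le_of_le hy hx]
  · rw [uninormOfTNorm_of_not_le_of_le hx hy, uninormOfTNorm_of_le_of_not_le hy hx]
  rcases lt_or_incompRel_of_not_le hx with hx' | hx'
  · rw [uninormOfTNorm_of_lt_of_not_le hx' hy, uninormOfTNorm_of_not_le_of_lt hy hx']
  rcases lt_or_incompRel_of_not_le hy with hy' | hy'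
  · rw [uninormOfTNorm_of_not_le_of_lt hx hy', uninormOfTNorm_of_lt_of_not_le hy' hx]
  rw [uninormOfTNorm_of_incompRel_of_incompRel hx' hy',
    uninormOfTNorm_of_incompRel_of_incompRel hy' hx', sup_comm]

theorem uninormOfTNorm_assoc_of_not_le (he : e ≠ ⊤)
    (hsup : ∀ y z, y ∥ e → z ∥ e → y ⊔ z ∥ e ∨ y ⊔ z = ⊤)
    (hx : ¬ x ≤ e) (hy : ¬ y ≤ e) (hz : ¬ z ≤ e) :
    uninormOfTNorm e T (uninormOfTNorm e T x y) z =
      uninormOfTNorm e T x (uninormOfTNorm e T y z) := by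
  have htop : ∀ {w}, ¬ w ≤ e → uninormOfTNorm e T w ⊤ = ⊤ := fun hw =>
    uninormOfTNorm_of_not_le_of_lt hw he.lt_top
  rcases lt_or_incompRel_of_not_le hx with hx' | hx'
  · rw [uninormOfTNorm_of_lt_of_not_le hx' hy, uninormOfTNorm_of_lt_of_not_le he.lt_top hz,
      uninormOfTNorm_of_lt_of_not_le hx' (not_uninormOfTNorm_le he hy hz)]
  rcases lt_or_incompRel_of_not_le hy with hy' | hy'
  · rw [uninormOfTNorm_of_not_le_of_lt hx hy', uninormOfTNorm_of_lt_of_not_le he.lt_top hz,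
      uninormOfTNorm_of_lt_of_not_le hy' hz, htop hx]
  rcases lt_or_incompRel_of_not_le hz with hz' | hz'
  · rw [uninormOfTNorm_of_not_le_of_lt (not_uninormOfTNorm_le he hx hy) hz',
      uninormOfTNorm_of_not_le_of_lt hy hz', htop hx]
  rw [uninormOfTNorm_of_incompRel_of_incompRel hx' hy',
    uninormOfTNorm_of_incompRel_of_incompRel hy' hz',
    uninormOfTNorm_of_incompRel_or_top he (hsup x y hx' hy') (.inl hz'),
    uninormOfTNorm_of_incompRel_or_top he (.inl hx') (hsup y z hy' hz'), sup_assoc]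

theorem uninormOfTNorm_assoc (hT : IsTNormBelow e T) (he : e ≠ ⊤)
    (hsup : ∀ y z, y ∥ e → z ∥ e → y ⊔ z ∥ e ∨ y ⊔ z = ⊤) (x y z : L) :
    uninormOfTNorm e T (uninormOfTNorm e T x y) z =
      uninormOfTNorm e T x (uninormOfTNorm e T y z) :=
  assoc_of_trivial_action_on_compl (uninormOfTNorm e T) (· ≤ e)
    (fun x y hx hy => by rw [uninormOfTNorm_of_le_of_le hx hy]; exact hT.apply_le x y hx hy)
    (fun _ _ => not_uninormOfTNorm_le he)
    (fun _ _ => uninormOfTNorm_of_le_of_not_le)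
    (fun _ _ ha hw => uninormOfTNorm_of_not_le_of_le hw ha)
    (fun x y z hx hy hz => by
      rw [uninormOfTNorm_of_le_of_le hx hy, uninormOfTNorm_of_le_of_le hy hz,
        uninormOfTNorm_of_le_of_le (hT.apply_le x y hx hy) hz,
        uninormOfTNorm_of_le_of_le hx (hT.apply_le y z hy hz), hT.assoc x y z hx hy hz])
    (fun _ _ _ => uninormOfTNorm_assoc_of_not_le he hsup) x y z

theorem le_uninormOfTNorm_of_not_le (hz : ¬ z ≤ e) (y : L) : z ≤ uninormOfTNorm e T y z := by
  by_cases hy : y ≤ e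
  · rw [uninormOfTNorm_of_le_of_not_le hy hz]
  rcases lt_or_incompRel_of_not_le hz with hz' | hz'
  · rw [uninormOfTNorm_of_not_le_of_lt hy hz']; exact le_top
  rcases lt_or_incompRel_of_not_le hy with hy' | hy'
  · rw [uninormOfTNorm_of_lt_of_not_le hy' hz]; exact le_top
  rw [uninormOfTNorm_of_incompRel_of_incompRel hy' hz']
  exact le_sup_right

theorem uninormOfTNorm_mono_left_of_not_le (hx : ¬ x ≤ e) (hz : ¬ z ≤ e) (hxy : x ≤ y) :
    uninormOfTNorm e T x z ≤ uninormOfTNorm e T y z := by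
  have hy : ¬ y ≤ e := fun h => hx (hxy.trans h)
  rcases lt_or_incompRel_of_not_le hz with hz' | hz'
  · rw [uninormOfTNorm_of_not_le_of_lt hy hz']; exact le_top
  rcases lt_or_incompRel_of_not_le hy with hy' | hy'
  · rw [uninormOfTNorm_of_lt_of_not_le hy' hz]; exact le_top
  rcases lt_or_incompRel_of_not_le hx with hx' | hx'
  · exact absurd (hx'.le.trans hxy) hy'.not_ge
  rw [uninormOfTNorm_of_incompRel_of_incompRel hx' hz',
    uninormOfTNorm_of_incompRel_of_incompRel hy' hz']
  exact sup_le_sup_right hxy z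

theorem uninormOfTNorm_mono_left (hT : IsTNormBelow e T) (hxy : x ≤ y) (z : L) :
    uninormOfTNorm e T x z ≤ uninormOfTNorm e T y z := by
  by_cases hz : z ≤ e
  · by_cases hy : y ≤ e
    · have hx := hxy.trans hy
      rw [uninormOfTNorm_of_le_of_le hx hz, uninormOfTNorm_of_le_of_le hy hz]
      exact hT.mono_left x y z hx hy hz hxy
    rw [uninormOfTNorm_of_not_le_of_le hy hz]
    by_cases hx : x ≤ e
    · rw [uninormOfTNorm_of_le_of_le hx hz]; exact (hT.apply_le_left hx hz).trans hxy
    · rw [uninormOfTNorm_of_not_le_of_le hx hz]; exact hxy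
  by_cases hx : x ≤ e
  · rw [uninormOfTNorm_of_le_of_not_le hx hz]; exact le_uninormOfTNorm_of_not_le hz y
  exact uninormOfTNorm_mono_left_of_not_le hx hz hxy

theorem uninormOfTNorm_neutral_left (hT : IsTNormBelow e T) (x : L) :
    uninormOfTNorm e T e x = x := by
  by_cases hx : x ≤ e
  · rw [uninormOfTNorm_of_le_of_le le_rfl hx, (hT.neutral x hx).1]
  · exact uninormOfTNorm_of_le_of_not_le le_rfl hx

end

open Classical in
theorem stmt5_general {L : Type*} [Lattice L] [BoundedOrder L] (e : L)
    (he1 : e ≠ ⊤)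
    (T : L → L → L)
    (hTcl : ∀ x y, x ≤ e → y ≤ e → T x y ≤ e)
    (hTcomm : ∀ x y, x ≤ e → y ≤ e → T x y = T y x)
    (hTassoc : ∀ x y z, x ≤ e → y ≤ e → z ≤ e → T (T x y) z = T x (T y z))
    (hTmono : ∀ x y z, x ≤ e → y ≤ e → z ≤ e → x ≤ y → T x z ≤ T y z)
    (hTe : ∀ x, x ≤ e → T e x = x ∧ T x e = x)
    (U : L → L → L)
    (hU : ∀ x y, U x y =
      if x ≤ e ∧ y ≤ e then T x y
      else if (x ≤ e ∧ e < y) ∨ (e < x ∧ y ≤ e) ∨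
          ((¬ x ≤ e ∧ ¬ e ≤ x) ∧ (¬ y ≤ e ∧ ¬ e ≤ y)) then x ⊔ y
      else if x ≤ e ∧ (¬ y ≤ e ∧ ¬ e ≤ y) then y
      else if (¬ x ≤ e ∧ ¬ e ≤ x) ∧ y ≤ e then x
      else (⊤ : L))
    (hcond : (∀ y z, (¬ y ≤ e ∧ ¬ e ≤ y) → (¬ z ≤ e ∧ ¬ e ≤ z) →
      (¬ y ⊔ z ≤ e ∧ ¬ e ≤ y ⊔ z) ∨ y ⊔ z = ⊤)) :
    ((∀ x y, U x y = U y x) ∧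
      (∀ x y z, U (U x y) z = U x (U y z)) ∧
      (∀ x y z, x ≤ y → U x z ≤ U y z ∧ U z x ≤ U z y) ∧
      (∀ x, U e x = x ∧ U x e = x)) := by
  obtain rfl : U = uninormOfTNorm e T := funext₂ hU
  have hT : IsTNormBelow e T := ⟨hTcl, hTcomm, hTassoc, hTmono, hTe⟩
  have hcomm := uninormOfTNorm_comm hT
  refine ⟨hcomm, uninormOfTNorm_assoc hT he1 hcond, fun x y z hxy => ?_, fun x => ?_⟩
  · rw [hcomm z x, hcomm z y]
    exact ⟨uninormOfTNorm_mono_left hT hxy z, uninormOfTNorm_mono_left hT hxy z⟩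
  · rw [hcomm x e]
    exact ⟨uninormOfTNorm_neutral_left hT x, uninormOfTNorm_neutral_left hT x⟩

open Classical in
theorem stmt5 {L : Type*} [Lattice L] [BoundedOrder L] (e : L)
    (he0 : e ≠ ⊥) (he1 : e ≠ ⊤)
    (T : L → L → L)
    (hTcl : ∀ x y, x ≤ e → y ≤ e → T x y ≤ e)
    (hTcomm : ∀ x y, x ≤ e → y ≤ e → T x y = T y x)
    (hTassoc : ∀ x y z, x ≤ e → y ≤ e → z ≤ e → T (T x y) z = T x (T y z))
    (hTmono : ∀ x y z, x ≤ e → y ≤ e → z ≤ e → x ≤ y → T x z ≤ T y z)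
    (hTe : ∀ x, x ≤ e → T e x = x ∧ T x e = x)
    (U : L → L → L)
    (hU : ∀ x y, U x y =
      if x ≤ e ∧ y ≤ e then T x y
      else if (x ≤ e ∧ e < y) ∨ (e < x ∧ y ≤ e) ∨
          ((¬ x ≤ e ∧ ¬ e ≤ x) ∧ (¬ y ≤ e ∧ ¬ e ≤ y)) then x ⊔ y
      else if x ≤ e ∧ (¬ y ≤ e ∧ ¬ e ≤ y) then y
      else if (¬ x ≤ e ∧ ¬ e ≤ x) ∧ y ≤ e then x
      else (⊤ : L))
    (hcond : (∀ y z, (¬ y ≤ e ∧ ¬ e ≤ y) → (¬ z ≤ e ∧ ¬ e ≤ z) →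
      (¬ y ⊔ z ≤ e ∧ ¬ e ≤ y ⊔ z) ∨ y ⊔ z = ⊤)) :
    ((∀ x y, U x y = U y x) ∧
      (∀ x y z, U (U x y) z = U x (U y z)) ∧
      (∀ x y z, x ≤ y → U x z ≤ U y z ∧ U z x ≤ U z y) ∧
      (∀ x, U e x = x ∧ U x e = x)) :=
  stmt5_general e he1 T hTcl hTcomm hTassoc hTmono hTe U hU hcond
end

section
/- Let $(L,\leq,0,1)$ be a bounded lattice, $e\in L\setminus\{0,1\}$, $I_e=\{x: x\parallel e\}$ with $\{y\vee z: y,z\in I_e\}\subseteq I_e\cup\{1\}$. Let $T_e$ be a t-norm on $[0,e]$ and define $U_T(x,y)=T_e(x,y)$ on $[0,e]^2$; $1$ on $(e,1]^2$; $y$ on $[0,e]\times I_e$; $x$ on $I_e\times[0,e]$; $x\vee y$ otherwise. Then $U_T$ is a uninorm on $L$ with neutral element $e$. -/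
/-!
Split `L` into the down-set `[0, e]` and its complement `N = (e, 1] ∪ I_e`. Then `U_T` is `T_e`
on `[0, e]²`; on `N²` it is the join, except that it is `⊤` on `(e, 1]²`; and elements of `[0, e]`
act as the identity on `N`. Each uninorm axiom reduces to the same property of the two pieces.
On `N`, both bracketings of a product of three elements equal `⊤` if two of them lie above `e`
and their join otherwise. The hypothesis on `I_e` is what makes this true when `x, y ∈ I_e` but
`e < x ⊔ y`.
-/

section GluedOp

variable {α : Type*} (p : α → Prop) [DecidablePred p] (f g : α → α → α)

def gluedOp (x y : α) : α :=
  if p x then (if p y then f x y else y) else if p y then x else g x y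

variable {p f g}

theorem gluedOp_comm (hf : ∀ x y, p x → p y → f x y = f y x)
    (hg : ∀ x y, ¬p x → ¬p y → g x y = g y x) (x y : α) :
    gluedOp p f g x y = gluedOp p f g y x := by
  unfold gluedOp
  by_cases hx : p x <;> by_cases hy : p y <;> simp [hx, hy, hf, hg]

theorem gluedOp_left_id {e : α} (hf : ∀ x, p x → f e x = x) (he : p e) (x : α) :
    gluedOp p f g e x = x := by
  unfold gluedOp
  by_cases hx : p x <;> simp [he, hx, hf]

theorem gluedOp_right_id {e : α} (hf : ∀ x, p x → f x e = x) (he : p e) (x : α) :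
    gluedOp p f g x e = x := by
  unfold gluedOp
  by_cases hx : p x <;> simp [he, hx, hf]

theorem gluedOp_assoc (hfp : ∀ x y, p x → p y → p (f x y))
    (hgp : ∀ x y, ¬p x → ¬p y → ¬p (g x y))
    (hf : ∀ x y z, p x → p y → p z → f (f x y) z = f x (f y z))
    (hg : ∀ x y z, ¬p x → ¬p y → ¬p z → g (g x y) z = g x (g y z)) (x y z : α) :
    gluedOp p f g (gluedOp p f g x y) z = gluedOp p f g x (gluedOp p f g y z) := by
  unfold gluedOp
  by_cases hx : p x <;> by_cases hy : p y <;> by_cases hz : p z <;>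
    simp [hx, hy, hz, hf, hg, hfp, hgp]

theorem gluedOp_mono_left [Preorder α] (hp : ∀ x y, x ≤ y → p y → p x)
    (hf : ∀ x y z, p x → p y → p z → x ≤ y → f x z ≤ f y z)
    (hf_le : ∀ x z, p x → p z → f x z ≤ x)
    (hg : ∀ x y z, ¬p x → ¬p y → ¬p z → x ≤ y → g x z ≤ g y z)
    (hg_le : ∀ y z, ¬p y → ¬p z → z ≤ g y z) {x y : α} (hxy : x ≤ y) (z : α) :
    gluedOp p f g x z ≤ gluedOp p f g y z := by
  unfold gluedOp
  by_cases hx : p x <;> by_cases hy : p y <;> by_cases hz : p z <;>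
    simp only [hx, hy, hz, if_true, if_false, le_refl]
  · exact hf x y z hx hy hz hxy
  · exact (hf_le x z hx hz).trans hxy
  · exact hg_le y z hy hz
  all_goals first
    | exact absurd (hp x y hxy hy) hx
    | exact hxy
    | exact hg x y z hx hy hz hxy

end GluedOp

section JoinTop

variable {L : Type*} [Lattice L] [BoundedOrder L]

open Classical

noncomputable def joinTop (e x y : L) : L :=
  if e < x ∧ e < y then ⊤ else x ⊔ y

variable {e : L}

theorem joinTop_comm (x y : L) : joinTop e x y = joinTop e y x := by
  rw [joinTop, joinTop, sup_comm]
  exact if_congr and_comm rfl rfl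

theorem le_joinTop_right (x y : L) : y ≤ joinTop e x y := by
  unfold joinTop
  split_ifs
  exacts [le_top, le_sup_right]

theorem joinTop_not_le {x y : L} (hx : ¬x ≤ e) : ¬joinTop e x y ≤ e :=
  fun h => hx ((joinTop_comm x y ▸ le_joinTop_right y x).trans h)

theorem joinTop_mono_left {x y : L} (hxy : x ≤ y) (z : L) : joinTop e x z ≤ joinTop e y z := by
  unfold joinTop
  split_ifs with hx hy
  · exact le_rfl
  · exact absurd ⟨hx.1.trans_le hxy, hx.2⟩ hy
  · exact le_top
  · exact sup_le_sup_right hxy z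

theorem joinTop_joinTop
    (hI : ∀ y z, ¬y ≤ e → ¬e ≤ y → ¬z ≤ e → ¬e ≤ z → e < y ⊔ z → y ⊔ z = ⊤)
    {x y z : L} (hx : ¬x ≤ e) (hy : ¬y ≤ e) :
    joinTop e (joinTop e x y) z =
      if (e < x ∧ e < y) ∨ (e < y ∧ e < z) ∨ (e < z ∧ e < x) then ⊤ else x ⊔ y ⊔ z := by
  unfold joinTop
  by_cases hex : e < x <;> by_cases hey : e < y <;> by_cases hez : e < z <;>
    simp [hex, hey, hez, lt_sup_of_lt_left, lt_sup_of_lt_right]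
  intro hxy
  rw [hI x y hx (fun h => hex (lt_of_le_not_ge h hx)) hy (fun h => hey (lt_of_le_not_ge h hy)) hxy,
    top_sup_eq]

theorem joinTop_assoc
    (hI : ∀ y z, ¬y ≤ e → ¬e ≤ y → ¬z ≤ e → ¬e ≤ z → e < y ⊔ z → y ⊔ z = ⊤)
    {x y z : L} (hx : ¬x ≤ e) (hy : ¬y ≤ e) (hz : ¬z ≤ e) :
    joinTop e (joinTop e x y) z = joinTop e x (joinTop e y z) := by
  rw [joinTop_comm x (joinTop e y z), joinTop_joinTop hI hx hy, joinTop_joinTop hI hy hz]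
  exact if_congr (by tauto) rfl (by ac_rfl)

end JoinTop

theorem le_left_of_monotone_of_neutral {L : Type*} [Preorder L] {e : L} {T : L → L → L}
    (hTcomm : ∀ x y, x ≤ e → y ≤ e → T x y = T y x)
    (hTmono : ∀ x y z, x ≤ e → y ≤ e → z ≤ e → x ≤ y → T x z ≤ T y z)
    (hTe : ∀ x, x ≤ e → T e x = x) {x z : L} (hx : x ≤ e) (hz : z ≤ e) : T x z ≤ x :=
  calc T x z = T z x := hTcomm x z hx hz
    _ ≤ T e x := hTmono z e x hz le_rfl hx hz
    _ = x := hTe x hx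

open Classical in
theorem stmt10_general {L : Type*} [Lattice L] [BoundedOrder L] (e : L)
    (T : L → L → L)
    (hTcl : ∀ x y, x ≤ e → y ≤ e → T x y ≤ e)
    (hTcomm : ∀ x y, x ≤ e → y ≤ e → T x y = T y x)
    (hTassoc : ∀ x y z, x ≤ e → y ≤ e → z ≤ e → T (T x y) z = T x (T y z))
    (hTmono : ∀ x y z, x ≤ e → y ≤ e → z ≤ e → x ≤ y → T x z ≤ T y z)
    (hTe : ∀ x, x ≤ e → T e x = x ∧ T x e = x)
    (U : L → L → L)
    (hU : ∀ x y, U x y =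
      if x ≤ e ∧ y ≤ e then T x y
      else if e < x ∧ e < y then (⊤ : L)
      else if x ≤ e ∧ (¬ y ≤ e ∧ ¬ e ≤ y) then y
      else if (¬ x ≤ e ∧ ¬ e ≤ x) ∧ y ≤ e then x
      else x ⊔ y)
    (hcond : (∀ y z, (¬ y ≤ e ∧ ¬ e ≤ y) → (¬ z ≤ e ∧ ¬ e ≤ z) →
      (¬ y ⊔ z ≤ e ∧ ¬ e ≤ y ⊔ z) ∨ y ⊔ z = ⊤)) :
    ((∀ x y, U x y = U y x) ∧
      (∀ x y z, U (U x y) z = U x (U y z)) ∧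
      (∀ x y z, x ≤ y → U x z ≤ U y z ∧ U z x ≤ U z y) ∧
      (∀ x, U e x = x ∧ U x e = x)) := by
  have hU_glued : U = gluedOp (· ≤ e) T (joinTop e) := by
    funext x y
    rw [hU, gluedOp, joinTop]
    by_cases hx : x ≤ e <;> by_cases hy : y ≤ e <;> by_cases hex : e ≤ x <;> by_cases hey : e ≤ y <;>
      simp [hx, hy, hex, hey, lt_iff_le_not_ge] <;> order
  subst hU_glued
  have hI : ∀ y z, ¬y ≤ e → ¬e ≤ y → ¬z ≤ e → ¬e ≤ z → e < y ⊔ z → y ⊔ z = ⊤ :=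
    fun y z hy hy' hz hz' hyz => (hcond y z ⟨hy, hy'⟩ ⟨hz, hz'⟩).resolve_left fun h => h.2 hyz.le
  have comm := gluedOp_comm hTcomm fun x y _ _ => joinTop_comm (e := e) x y
  have mono {x y : L} (hxy : x ≤ y) (z : L) :
      gluedOp (· ≤ e) T (joinTop e) x z ≤ gluedOp (· ≤ e) T (joinTop e) y z :=
    gluedOp_mono_left (fun _ _ h hy => h.trans hy) hTmono
      (fun _ _ => le_left_of_monotone_of_neutral hTcomm hTmono fun x hx => (hTe x hx).1)
      (fun _ _ z _ _ _ h => joinTop_mono_left h z) (fun a b _ _ => le_joinTop_right a b) hxy z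
  refine ⟨comm, gluedOp_assoc hTcl (fun _ _ hx _ => joinTop_not_le hx) hTassoc
    (fun _ _ _ => joinTop_assoc hI), fun x y z hxy => ⟨mono hxy z, ?_⟩,
    fun x => ⟨gluedOp_left_id (fun x hx => (hTe x hx).1) le_rfl x,
      gluedOp_right_id (fun x hx => (hTe x hx).2) le_rfl x⟩⟩
  rw [comm z x, comm z y]
  exact mono hxy z

open Classical in
theorem stmt10 {L : Type*} [Lattice L] [BoundedOrder L] (e : L)
    (he0 : e ≠ ⊥) (he1 : e ≠ ⊤)
    (T : L → L → L)
    (hTcl : ∀ x y, x ≤ e → y ≤ e → T x y ≤ e)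
    (hTcomm : ∀ x y, x ≤ e → y ≤ e → T x y = T y x)
    (hTassoc : ∀ x y z, x ≤ e → y ≤ e → z ≤ e → T (T x y) z = T x (T y z))
    (hTmono : ∀ x y z, x ≤ e → y ≤ e → z ≤ e → x ≤ y → T x z ≤ T y z)
    (hTe : ∀ x, x ≤ e → T e x = x ∧ T x e = x)
    (U : L → L → L)
    (hU : ∀ x y, U x y =
      if x ≤ e ∧ y ≤ e then T x y
      else if e < x ∧ e < y then (⊤ : L)
      else if x ≤ e ∧ (¬ y ≤ e ∧ ¬ e ≤ y) then y
      else if (¬ x ≤ e ∧ ¬ e ≤ x) ∧ y ≤ e then x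
      else x ⊔ y)
    (hcond : (∀ y z, (¬ y ≤ e ∧ ¬ e ≤ y) → (¬ z ≤ e ∧ ¬ e ≤ z) →
      (¬ y ⊔ z ≤ e ∧ ¬ e ≤ y ⊔ z) ∨ y ⊔ z = ⊤)) :
    ((∀ x y, U x y = U y x) ∧
      (∀ x y z, U (U x y) z = U x (U y z)) ∧
      (∀ x y z, x ≤ y → U x z ≤ U y z ∧ U z x ≤ U z y) ∧
      (∀ x, U e x = x ∧ U x e = x)) :=
  stmt10_general e T hTcl hTcomm hTassoc hTmono hTe U hU hcond
end

section
/- Let $(L,\leq,0,1)$ be a bounded lattice, $e\in L\setminus\{0,1\}$, $I_e=\{x: x\parallel e\}$, and let $T_e$ be a t-norm on $[0,e]$. Define $U_{T_e}(x,y)=T_e(x,y)$ on $[0,e]^2$; $y$ on $[e,1]\times I_e$; $x$ on $I_e\times[e,1]$; $0$ on $([0,e)\times I_e)\cup(I_e\times[0,e))$; $x\wedge y$ on $([0,e)\times[e,1])\cup([e,1]\times[0,e))\cup(I_e\times I_e)$; $x\vee y$ otherwise. If $U_{T_e}$ is a uninorm on $L$ with neutral element $e$, then $T_e(x,y)=0$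 for all $x\in[0,e)$ and all $y\in\mathscr{P}$, where $\mathscr{P}=\{x\in(0,e): \exists z\in I_e,\ x\leq z\}$. -/
open Classical in
theorem stmt12_general {L : Type*} [Lattice L] [BoundedOrder L] (e : L)
    (T : L → L → L)
    (U : L → L → L)
    (hU : ∀ x y, U x y =
      if x ≤ e ∧ y ≤ e then T x y
      else if e ≤ x ∧ (¬ y ≤ e ∧ ¬ e ≤ y) then y
      else if (¬ x ≤ e ∧ ¬ e ≤ x) ∧ e ≤ y then x
      else if (x < e ∧ (¬ y ≤ e ∧ ¬ e ≤ y)) ∨ ((¬ x ≤ e ∧ ¬ e ≤ x) ∧ y < e) then (⊥ : L)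
      else if (x < e ∧ e ≤ y) ∨ (e ≤ x ∧ y < e) ∨
          ((¬ x ≤ e ∧ ¬ e ≤ x) ∧ (¬ y ≤ e ∧ ¬ e ≤ y)) then x ⊓ y
      else x ⊔ y)
    (huni : ((∀ x y, U x y = U y x) ∧
      (∀ x y z, U (U x y) z = U x (U y z)) ∧
      (∀ x y z, x ≤ y → U x z ≤ U y z ∧ U z x ≤ U z y) ∧
      (∀ x, U e x = x ∧ U x e = x))) :
    (∀ x y, x < e → (⊥ < y ∧ y < e ∧ ∃ z, (¬ z ≤ e ∧ ¬ e ≤ z) ∧ y ≤ z) → T x y = ⊥) := by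
  rintro x y hx ⟨-, hye, z, ⟨hze, hez⟩, hyz⟩
  have hUxy : U x y = T x y := by
    simp [hU, hx.le, hye.le]
  have hUxz : U x z = ⊥ := by
    simp [hU, hx, hx.not_ge, hze, hez]
  refine le_bot_iff.mp ?_
  calc T x y = U x y := hUxy.symm
    _ ≤ U x z := (huni.2.2.1 y z x hyz).2
    _ = ⊥ := hUxz

open Classical in
theorem stmt12 {L : Type*} [Lattice L] [BoundedOrder L] (e : L)
    (he0 : e ≠ ⊥) (he1 : e ≠ ⊤)
    (T : L → L → L)
    (hTcl : ∀ x y, x ≤ e → y ≤ e → T x y ≤ e)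
    (hTcomm : ∀ x y, x ≤ e → y ≤ e → T x y = T y x)
    (hTassoc : ∀ x y z, x ≤ e → y ≤ e → z ≤ e → T (T x y) z = T x (T y z))
    (hTmono : ∀ x y z, x ≤ e → y ≤ e → z ≤ e → x ≤ y → T x z ≤ T y z)
    (hTe : ∀ x, x ≤ e → T e x = x ∧ T x e = x)
    (U : L → L → L)
    (hU : ∀ x y, U x y =
      if x ≤ e ∧ y ≤ e then T x y
      else if e ≤ x ∧ (¬ y ≤ e ∧ ¬ e ≤ y) then y
      else if (¬ x ≤ e ∧ ¬ e ≤ x) ∧ e ≤ y then x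
      else if (x < e ∧ (¬ y ≤ e ∧ ¬ e ≤ y)) ∨ ((¬ x ≤ e ∧ ¬ e ≤ x) ∧ y < e) then (⊥ : L)
      else if (x < e ∧ e ≤ y) ∨ (e ≤ x ∧ y < e) ∨
          ((¬ x ≤ e ∧ ¬ e ≤ x) ∧ (¬ y ≤ e ∧ ¬ e ≤ y)) then x ⊓ y
      else x ⊔ y)
    (huni : ((∀ x y, U x y = U y x) ∧
      (∀ x y z, U (U x y) z = U x (U y z)) ∧
      (∀ x y z, x ≤ y → U x z ≤ U y z ∧ U z x ≤ U z y) ∧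
      (∀ x, U e x = x ∧ U x e = x))) :
    (∀ x y, x < e → (⊥ < y ∧ y < e ∧ ∃ z, (¬ z ≤ e ∧ ¬ e ≤ z) ∧ y ≤ z) → T x y = ⊥) :=
  stmt12_general e T U hU huni
end

section
/- Let $(L,\leq,0,1)$ be a bounded lattice, $e\in L\setminus\{0,1\}$, $I_e=\{x: x\parallel e\}$, and let $T_e$ be a t-norm on $[0,e]$. Define $U_{T_e}$ as: $T_e(x,y)$ on $[0,e]^2$; $y$ on $[e,1]\times I_e$; $x$ on $I_e\times[e,1]$; $0$ on $([0,e)\times I_e)\cup(I_e\times[0,e))$; $x\wedge y$ on $([0,e)\times[e,1])\cup([e,1]\times[0,e))\cup(I_e\times I_e)$; $x\vee y$ otherwise. If $U_{T_e}$ is associative, then $\{y\wedge z: y,z\in I_e\}\subseteq I_e\cup\{0\}$. -/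
/-! Take `y z ∈ I_e` with `y ⊓ z ∉ I_e`. Then `y ⊓ z < e`, so associativity on the triple `(y, z, z)` gives
`y ⊓ z = U y (U z z) = U (U y z) z = U (y ⊓ z) z = 0`. -/

open Classical in
theorem stmt13_general {L : Type*} [Lattice L] [BoundedOrder L] (e : L)
    (T : L → L → L)
    (U : L → L → L)
    (hU : ∀ x y, U x y =
      if x ≤ e ∧ y ≤ e then T x y
      else if e ≤ x ∧ (¬ y ≤ e ∧ ¬ e ≤ y) then y
      else if (¬ x ≤ e ∧ ¬ e ≤ x) ∧ e ≤ y then x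
      else if (x < e ∧ (¬ y ≤ e ∧ ¬ e ≤ y)) ∨ ((¬ x ≤ e ∧ ¬ e ≤ x) ∧ y < e) then (⊥ : L)
      else if (x < e ∧ e ≤ y) ∨ (e ≤ x ∧ y < e) ∨
          ((¬ x ≤ e ∧ ¬ e ≤ x) ∧ (¬ y ≤ e ∧ ¬ e ≤ y)) then x ⊓ y
      else x ⊔ y)
    (hassoc : ∀ x y z, U (U x y) z = U x (U y z)) :
    (∀ y z, (¬ y ≤ e ∧ ¬ e ≤ y) → (¬ z ≤ e ∧ ¬ e ≤ z) →
      (¬ y ⊓ z ≤ e ∧ ¬ e ≤ y ⊓ z) ∨ y ⊓ z = ⊥) := by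
  intro y z ⟨hye, hey⟩ ⟨hze, hez⟩
  have he_inf : ¬ e ≤ y ⊓ z := fun h => hey (h.trans inf_le_left)
  by_cases hinf_e : y ⊓ z ≤ e
  · right
    have hinf_lt : y ⊓ z < e := hinf_e.lt_of_not_ge he_inf
    have hUyz : U y z = y ⊓ z := by
      rw [hU]
      simp [hye, hey, hze, hez, mt le_of_lt hye, mt le_of_lt hze]
    have hUzz : U z z = z := by
      rw [hU]
      simp [hze, hez, mt le_of_lt hze]
    have hUinf : U (y ⊓ z) z = ⊥ := by
      rw [hU]
      simp [hinf_e, hze, hez, hinf_lt, not_le_of_gt hinf_lt]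
    calc y ⊓ z = U y (U z z) := by rw [hUzz, hUyz]
      _ = U (U y z) z := (hassoc y z z).symm
      _ = ⊥ := by rw [hUyz, hUinf]
  · exact Or.inl ⟨hinf_e, he_inf⟩

open Classical in
theorem stmt13 {L : Type*} [Lattice L] [BoundedOrder L] (e : L)
    (he0 : e ≠ ⊥) (he1 : e ≠ ⊤)
    (T : L → L → L)
    (hTcl : ∀ x y, x ≤ e → y ≤ e → T x y ≤ e)
    (hTcomm : ∀ x y, x ≤ e → y ≤ e → T x y = T y x)
    (hTassoc : ∀ x y z, x ≤ e → y ≤ e → z ≤ e → T (T x y) z = T x (T y z))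
    (hTmono : ∀ x y z, x ≤ e → y ≤ e → z ≤ e → x ≤ y → T x z ≤ T y z)
    (hTe : ∀ x, x ≤ e → T e x = x ∧ T x e = x)
    (U : L → L → L)
    (hU : ∀ x y, U x y =
      if x ≤ e ∧ y ≤ e then T x y
      else if e ≤ x ∧ (¬ y ≤ e ∧ ¬ e ≤ y) then y
      else if (¬ x ≤ e ∧ ¬ e ≤ x) ∧ e ≤ y then x
      else if (x < e ∧ (¬ y ≤ e ∧ ¬ e ≤ y)) ∨ ((¬ x ≤ e ∧ ¬ e ≤ x) ∧ y < e) then (⊥ : L)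
      else if (x < e ∧ e ≤ y) ∨ (e ≤ x ∧ y < e) ∨
          ((¬ x ≤ e ∧ ¬ e ≤ x) ∧ (¬ y ≤ e ∧ ¬ e ≤ y)) then x ⊓ y
      else x ⊔ y)
    (hassoc : ∀ x y z, U (U x y) z = U x (U y z)) :
    (∀ y z, (¬ y ≤ e ∧ ¬ e ≤ y) → (¬ z ≤ e ∧ ¬ e ≤ z) →
      (¬ y ⊓ z ≤ e ∧ ¬ e ≤ y ⊓ z) ∨ y ⊓ z = ⊥) :=
  stmt13_general e T U hU hassoc
end

section
/- Let $(L,\leq,0,1)$ be a bounded lattice, $e\in L\setminus\{0,1\}$, $I_e=\{x: x\parallel e\}$, $\mathscr{P}=\{x\in(0,e): \exists z\in I_e,\ x\leq z\}$, and let $T_e$ be a t-norm on $[0,e]$. Define $U_{T_e}$ as: $T_e(x,y)$ on $[0,e]^2$; $y$ on $[e,1]\times I_e$; $x$ on $I_e\times[e,1]$; $0$ on $([0,e)\times I_e)\cup(I_e\times[0,e))$; $x\wedge y$ on $([0,e)\times[e,1])\cup([e,1]\times[0,e))\cup(I_e\times I_e)$; $x\vee y$ otherwise. Then $U_{T_e}$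 is a uninorm on $L$ with neutral element $e$ if and only if both (a) $T_e(x,y)=0$ whenever $x\in[0,e)$ and $y\in\mathscr{P}$ (vacuously if $\mathscr{P}=\emptyset$), and (b) $\{y\wedge z: y,z\in I_e\}\subseteq I_e\cup\{0\}$. -/
/-!
Split `L` into `[0, e)`, `[e, 1]` and `I_e`. On `[e, 1]` the operation is `⊔`, and an element of
`[e, 1]` acts as an identity on everything outside `[e, 1]`; hence associativity reduces to
associativity on `[0, e) ∪ I_e`. There `⊥` absorbs every product mixing `[0, e)` with `I_e`, and
the only remaining issue is the block `I_e × I_e`, where the operation is `⊓`: associativity holds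
as soon as `⊓` maps `I_e × I_e` into `I_e ∪ {0}`, which is (b), and conversely
`U (U y z) z = U y z` forces (b). Monotonicity can only fail for `U (a, x) ≤ U (a, z)` with
`a ∈ [0, e)`, `x ∈ 𝒫` and `x ≤ z ∈ I_e`, where it says `T (a, x) ≤ 0`, which is (a).
-/

structure IsTNormOn {L : Type*} [LE L] (e : L) (T : L → L → L) : Prop where
  comm : ∀ x y, x ≤ e → y ≤ e → T x y = T y x
  assoc : ∀ x y z, x ≤ e → y ≤ e → z ≤ e → T (T x y) z = T x (T y z)
  mono_left : ∀ x y z, x ≤ e → y ≤ e → z ≤ e → x ≤ y → T x z ≤ T y z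
  neutral : ∀ x, x ≤ e → T e x = x ∧ T x e = x

namespace IsTNormOn

variable {L : Type*} [PartialOrder L] {e : L} {T : L → L → L} {x y : L}

theorem le_right (hT : IsTNormOn e T) (hx : x ≤ e) (hy : y ≤ e) : T x y ≤ y :=
  (hT.mono_left x e y hx le_rfl hy hx).trans_eq (hT.neutral y hy).1

theorem le_left (hT : IsTNormOn e T) (hx : x ≤ e) (hy : y ≤ e) : T x y ≤ x :=
  hT.comm x y hx hy ▸ hT.le_right hy hx

theorem bot_left [OrderBot L] (hT : IsTNormOn e T) (hx : x ≤ e) : T ⊥ x = ⊥ :=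
  le_bot_iff.1 (hT.le_left bot_le hx)

end IsTNormOn

theorem assoc_of_acts_trivially_on_compl {α : Type*} (f : α → α → α) (S : Set α)
    (hS : ∀ x ∈ S, ∀ y ∈ S, f x y ∈ S) (hSc : ∀ x ∉ S, ∀ y ∉ S, f x y ∉ S)
    (hassoc : ∀ x ∈ S, ∀ y ∈ S, ∀ z ∈ S, f (f x y) z = f x (f y z))
    (hassocc : ∀ x ∉ S, ∀ y ∉ S, ∀ z ∉ S, f (f x y) z = f x (f y z))
    (hleft : ∀ s ∈ S, ∀ t ∉ S, f s t = t) (hright : ∀ s ∈ S, ∀ t ∉ S, f t s = t)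
    (x y z : α) : f (f x y) z = f x (f y z) := by
  by_cases hx : x ∈ S <;> by_cases hy : y ∈ S <;> by_cases hz : z ∈ S
  · exact hassoc x hx y hy z hz
  · rw [hleft _ (hS x hx y hy) z hz, hleft y hy z hz, hleft x hx z hz]
  · rw [hleft x hx y hy, hright z hz y hy, hleft x hx y hy]
  · rw [hleft x hx y hy, hleft x hx _ (hSc y hy z hz)]
  · rw [hright y hy x hx, hright z hz x hx, hright _ (hS y hy z hz) x hx]
  · rw [hright y hy x hx, hleft y hy z hz]
  · rw [hright z hz _ (hSc x hx y hy), hright z hz y hy]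
  · exact hassocc x hx y hy z hz

open Classical in
/-- The paper's `U_{T_e}`. -/
noncomputable def extendTNorm {L : Type*} [Lattice L] [OrderBot L] (e : L) (T : L → L → L)
    (x y : L) : L :=
  if x ≤ e ∧ y ≤ e then T x y
  else if e ≤ x ∧ (¬ y ≤ e ∧ ¬ e ≤ y) then y
  else if (¬ x ≤ e ∧ ¬ e ≤ x) ∧ e ≤ y then x
  else if (x < e ∧ (¬ y ≤ e ∧ ¬ e ≤ y)) ∨ ((¬ x ≤ e ∧ ¬ e ≤ x) ∧ y < e) then (⊥ : L)
  else if (x < e ∧ e ≤ y) ∨ (e ≤ x ∧ y < e) ∨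
      ((¬ x ≤ e ∧ ¬ e ≤ x) ∧ (¬ y ≤ e ∧ ¬ e ≤ y)) then x ⊓ y
  else x ⊔ y

section ExtendTNorm

variable {L : Type*} [Lattice L] [OrderBot L] {e : L} {T : L → L → L} {x y z : L}

local notation "U" => extendTNorm e T

theorem extendTNorm_of_le_of_le (hx : x ≤ e) (hy : y ≤ e) : U x y = T x y :=
  if_pos ⟨hx, hy⟩

theorem extendTNorm_of_ge_of_ge (hT : IsTNormOn e T) (hx : e ≤ x) (hy : e ≤ y) :
    U x y = x ⊔ y := by
  by_cases h : x ≤ e ∧ y ≤ e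
  · obtain rfl := le_antisymm h.1 hx
    obtain rfl := le_antisymm h.2 hy
    rw [extendTNorm_of_le_of_le le_rfl le_rfl, (hT.neutral _ le_rfl).1, sup_idem]
  · simp [extendTNorm, h, hx, hy, hx.not_gt, hy.not_gt]

theorem extendTNorm_of_ge_of_not_ge (hT : IsTNormOn e T) (hx : e ≤ x) (hy : ¬ e ≤ y) :
    U x y = y := by
  rcases not_le_iff_lt_or_incompRel.1 hy with hy | hy
  · by_cases hxe : x ≤ e
    · obtain rfl := le_antisymm hxe hx
      exact (extendTNorm_of_le_of_le le_rfl hy.le).trans (hT.neutral y hy.le).1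
    · simp [extendTNorm, hxe, hx, hx.not_gt, hy, hy.le, hy.not_ge, hy.le.trans hx]
  · simp [extendTNorm, hx, hy.not_le, hy.not_ge]

theorem extendTNorm_of_not_ge_of_ge (hT : IsTNormOn e T) (hx : ¬ e ≤ x) (hy : e ≤ y) :
    U x y = x := by
  rcases not_le_iff_lt_or_incompRel.1 hx with hx | hx
  · by_cases hye : y ≤ e
    · obtain rfl := le_antisymm hye hy
      exact (extendTNorm_of_le_of_le hx.le le_rfl).trans (hT.neutral x hx.le).2
    · simp [extendTNorm, hye, hy, hy.not_gt, hx, hx.le, hx.not_ge, hx.le.trans hy]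
  · simp [extendTNorm, hy, hx.not_le, hx.not_ge]

theorem extendTNorm_of_lt_of_incomp (hx : x < e) (hy : IncompRel (· ≤ ·) y e) : U x y = ⊥ := by
  simp [extendTNorm, hx, hx.le, hx.not_ge, hy.not_le, hy.not_ge]

theorem extendTNorm_of_incomp_of_lt (hx : IncompRel (· ≤ ·) x e) (hy : y < e) : U x y = ⊥ := by
  simp [extendTNorm, hy, hy.le, hy.not_ge, hx.not_le, hx.not_ge]

theorem extendTNorm_of_incomp_of_incomp (hx : IncompRel (· ≤ ·) x e)
    (hy : IncompRel (· ≤ ·) y e) : U x y = x ⊓ y := by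
  simp [extendTNorm, hx.not_le, hx.not_ge, hy.not_le, hy.not_ge, hx.not_lt, hy.not_lt]


variable (T) in
theorem extendTNorm_comm (hT : IsTNormOn e T) (x y : L) : U x y = U y x := by
  by_cases hx : e ≤ x <;> by_cases hy : e ≤ y
  · rw [extendTNorm_of_ge_of_ge hT hx hy, extendTNorm_of_ge_of_ge hT hy hx, sup_comm]
  · rw [extendTNorm_of_ge_of_not_ge hT hx hy, extendTNorm_of_not_ge_of_ge hT hy hx]
  · rw [extendTNorm_of_not_ge_of_ge hT hx hy, extendTNorm_of_ge_of_not_ge hT hy hx]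
  rcases not_le_iff_lt_or_incompRel.1 hx with hx | hx <;>
    rcases not_le_iff_lt_or_incompRel.1 hy with hy | hy
  · rw [extendTNorm_of_le_of_le hx.le hy.le, extendTNorm_of_le_of_le hy.le hx.le,
      hT.comm x y hx.le hy.le]
  · rw [extendTNorm_of_lt_of_incomp hx hy, extendTNorm_of_incomp_of_lt hy hx]
  · rw [extendTNorm_of_incomp_of_lt hx hy, extendTNorm_of_lt_of_incomp hy hx]
  · rw [extendTNorm_of_incomp_of_incomp hx hy, extendTNorm_of_incomp_of_incomp hy hx, inf_comm]

theorem extendTNorm_neutral (hT : IsTNormOn e T) (x : L) : U e x = x ∧ U x e = x := by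
  by_cases hx : e ≤ x
  · rw [extendTNorm_of_ge_of_ge hT le_rfl hx, extendTNorm_of_ge_of_ge hT hx le_rfl,
      sup_eq_right.2 hx, sup_eq_left.2 hx]
    exact ⟨rfl, rfl⟩
  · exact ⟨extendTNorm_of_ge_of_not_ge hT le_rfl hx, extendTNorm_of_not_ge_of_ge hT hx le_rfl⟩

theorem extendTNorm_bot_left (he : e ≠ ⊥) (hT : IsTNormOn e T) (y : L) : U ⊥ y = ⊥ := by
  have hbot : (⊥ : L) < e := he.bot_lt
  by_cases hy : e ≤ y
  · exact extendTNorm_of_not_ge_of_ge hT hbot.not_ge hy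
  rcases not_le_iff_lt_or_incompRel.1 hy with hy | hy
  · exact (extendTNorm_of_le_of_le bot_le hy.le).trans (hT.bot_left hy.le)
  · exact extendTNorm_of_lt_of_incomp hbot hy

theorem extendTNorm_bot_right (he : e ≠ ⊥) (hT : IsTNormOn e T) (x : L) : U x ⊥ = ⊥ :=
  (extendTNorm_comm T hT x ⊥).trans (extendTNorm_bot_left he hT x)

variable (y) in
theorem extendTNorm_le_left (hT : IsTNormOn e T) (hx : ¬ e ≤ x) : U x y ≤ x := by
  by_cases hy : e ≤ y
  · exact (extendTNorm_of_not_ge_of_ge hT hx hy).le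
  rcases not_le_iff_lt_or_incompRel.1 hx with hx | hx <;>
    rcases not_le_iff_lt_or_incompRel.1 hy with hy | hy
  · exact (extendTNorm_of_le_of_le hx.le hy.le).trans_le (hT.le_left hx.le hy.le)
  · exact (extendTNorm_of_lt_of_incomp hx hy).trans_le bot_le
  · exact (extendTNorm_of_incomp_of_lt hx hy).trans_le bot_le
  · exact (extendTNorm_of_incomp_of_incomp hx hy).trans_le inf_le_left

theorem extendTNorm_of_incomp_or_bot_of_incomp (he : e ≠ ⊥) (hT : IsTNormOn e T)
    (hx : IncompRel (· ≤ ·) x e ∨ x = ⊥) (hy : IncompRel (· ≤ ·) y e) : U x y = x ⊓ y := by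
  rcases hx with hx | rfl
  · exact extendTNorm_of_incomp_of_incomp hx hy
  · rw [extendTNorm_bot_left he hT, bot_inf_eq]

theorem extendTNorm_of_lt_of_incomp_or_bot (he : e ≠ ⊥) (hT : IsTNormOn e T) (hx : x < e)
    (hy : IncompRel (· ≤ ·) y e ∨ y = ⊥) : U x y = ⊥ := by
  rcases hy with hy | rfl
  · exact extendTNorm_of_lt_of_incomp hx hy
  · exact extendTNorm_bot_right he hT x


variable (x) in
theorem extendTNorm_le_right (hT : IsTNormOn e T) (hy : ¬ e ≤ y) : U x y ≤ y :=
  (extendTNorm_comm T hT x y).trans_le (extendTNorm_le_left x hT hy)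

theorem extendTNorm_assoc_of_not_ge (he : e ≠ ⊥) (hT : IsTNormOn e T)
    (hinf : ∀ y z, IncompRel (· ≤ ·) y e → IncompRel (· ≤ ·) z e →
      IncompRel (· ≤ ·) (y ⊓ z) e ∨ y ⊓ z = ⊥)
    (hx : ¬ e ≤ x) (hy : ¬ e ≤ y) (hz : ¬ e ≤ z) : U (U x y) z = U x (U y z) := by
  have hTlt : ∀ {a b}, a < e → b ≤ e → T a b < e := fun ha hb =>
    (hT.le_left ha.le hb).trans_lt ha
  rcases not_le_iff_lt_or_incompRel.1 hx with hx | hx <;>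
    rcases not_le_iff_lt_or_incompRel.1 hy with hy | hy <;>
    rcases not_le_iff_lt_or_incompRel.1 hz with hz | hz
  · rw [extendTNorm_of_le_of_le hx.le hy.le, extendTNorm_of_le_of_le hy.le hz.le,
      extendTNorm_of_le_of_le (hTlt hx hy.le).le hz.le,
      extendTNorm_of_le_of_le hx.le (hTlt hy hz.le).le]
    exact hT.assoc x y z hx.le hy.le hz.le
  · rw [extendTNorm_of_le_of_le hx.le hy.le, extendTNorm_of_lt_of_incomp (hTlt hx hy.le) hz,
      extendTNorm_of_lt_of_incomp hy hz, extendTNorm_bot_right he hT]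
  · rw [extendTNorm_of_lt_of_incomp hx hy, extendTNorm_bot_left he hT,
      extendTNorm_of_incomp_of_lt hy hz, extendTNorm_bot_right he hT]
  · rw [extendTNorm_of_lt_of_incomp hx hy, extendTNorm_bot_left he hT,
      extendTNorm_of_incomp_of_incomp hy hz,
      extendTNorm_of_lt_of_incomp_or_bot he hT hx (hinf y z hy hz)]
  · rw [extendTNorm_of_incomp_of_lt hx hy, extendTNorm_bot_left he hT,
      extendTNorm_of_le_of_le hy.le hz.le, extendTNorm_of_incomp_of_lt hx (hTlt hy hz.le)]
  · rw [extendTNorm_of_incomp_of_lt hx hy, extendTNorm_bot_left he hT,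
      extendTNorm_of_lt_of_incomp hy hz, extendTNorm_bot_right he hT]
  · rw [extendTNorm_of_incomp_of_incomp hx hy, extendTNorm_of_incomp_of_lt hy hz,
      extendTNorm_bot_right he hT, extendTNorm_comm T hT,
      extendTNorm_of_lt_of_incomp_or_bot he hT hz (hinf x y hx hy)]
  · rw [extendTNorm_of_incomp_of_incomp hx hy, extendTNorm_of_incomp_of_incomp hy hz,
      extendTNorm_of_incomp_or_bot_of_incomp he hT (hinf x y hx hy) hz, extendTNorm_comm T hT x,
      extendTNorm_of_incomp_or_bot_of_incomp he hT (hinf y z hy hz) hx, inf_comm _ x, inf_assoc]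

theorem extendTNorm_assoc (he : e ≠ ⊥) (hT : IsTNormOn e T)
    (hinf : ∀ y z, IncompRel (· ≤ ·) y e → IncompRel (· ≤ ·) z e →
      IncompRel (· ≤ ·) (y ⊓ z) e ∨ y ⊓ z = ⊥)
    (x y z : L) : U (U x y) z = U x (U y z) :=
  assoc_of_acts_trivially_on_compl U (Set.Ici e)
    (fun x hx y hy => (extendTNorm_of_ge_of_ge hT hx hy).symm ▸ le_sup_of_le_left hx)
    (fun x hx y _ hxy => hx (hxy.trans (extendTNorm_le_left y hT hx)))
    (fun x hx y hy z hz => by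
      rw [extendTNorm_of_ge_of_ge hT hx hy, extendTNorm_of_ge_of_ge hT hy hz,
        extendTNorm_of_ge_of_ge hT (le_sup_of_le_left hx) hz,
        extendTNorm_of_ge_of_ge hT hx (le_sup_of_le_left hy), sup_assoc])
    (fun x hx y hy z hz => extendTNorm_assoc_of_not_ge he hT hinf hx hy hz)
    (fun _ hs _ ht => extendTNorm_of_ge_of_not_ge hT hs ht)
    (fun _ hs _ ht => extendTNorm_of_not_ge_of_ge hT ht hs) x y z

theorem extendTNorm_mono_left_of_ge (hT : IsTNormOn e T) (hz : e ≤ z) :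
    Monotone (U · z) := by
  intro x y hxy
  dsimp only
  by_cases hy : e ≤ y
  · rw [extendTNorm_of_ge_of_ge hT hy hz]
    by_cases hx : e ≤ x
    · rw [extendTNorm_of_ge_of_ge hT hx hz]
      exact sup_le_sup_right hxy z
    · rw [extendTNorm_of_not_ge_of_ge hT hx hz]
      exact hxy.trans le_sup_left
  · rw [extendTNorm_of_not_ge_of_ge hT hy hz,
      extendTNorm_of_not_ge_of_ge hT (fun hx => hy (hx.trans hxy)) hz]
    exact hxy

theorem extendTNorm_mono_left_of_lt (hT : IsTNormOn e T)
    (hP : ∀ x y, x < e → (⊥ < y ∧ y < e ∧ ∃ z, IncompRel (· ≤ ·) z e ∧ y ≤ z) → T x y = ⊥)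
    (hz : z < e) : Monotone (U · z) := by
  intro x y hxy
  dsimp only
  by_cases hy : e ≤ y
  · rw [extendTNorm_of_ge_of_not_ge hT hy hz.not_ge]
    exact extendTNorm_le_right x hT hz.not_ge
  rcases not_le_iff_lt_or_incompRel.1 hy with hy | hy
  · have hx := hxy.trans_lt hy
    rw [extendTNorm_of_le_of_le hx.le hz.le, extendTNorm_of_le_of_le hy.le hz.le]
    exact hT.mono_left x y z hx.le hy.le hz.le hxy
  rw [extendTNorm_of_incomp_of_lt hy hz, le_bot_iff]
  rcases not_le_iff_lt_or_incompRel.1 (fun h => hy.not_ge (h.trans hxy)) with hx | hx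
  · rw [extendTNorm_of_le_of_le hx.le hz.le]
    rcases eq_bot_or_bot_lt x with rfl | hx0
    · exact hT.bot_left hz.le
    · rw [hT.comm x z hx.le hz.le]
      exact hP z x hz ⟨hx0, hx, y, hy, hxy⟩
  · exact extendTNorm_of_incomp_of_lt hx hz

theorem extendTNorm_mono_left_of_incomp (hT : IsTNormOn e T) (hz : IncompRel (· ≤ ·) z e) :
    Monotone (U · z) := by
  intro x y hxy
  dsimp only
  by_cases hy : e ≤ y
  · rw [extendTNorm_of_ge_of_not_ge hT hy hz.not_ge]
    exact extendTNorm_le_right x hT hz.not_ge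
  rcases not_le_iff_lt_or_incompRel.1 (fun h => hy (h.trans hxy)) with hx | hx
  · rw [extendTNorm_of_lt_of_incomp hx hz]
    exact bot_le
  · have hy' : IncompRel (· ≤ ·) y e := ⟨fun h => hx.not_le (hxy.trans h), hy⟩
    rw [extendTNorm_of_incomp_of_incomp hx hz, extendTNorm_of_incomp_of_incomp hy' hz]
    exact inf_le_inf_right z hxy

theorem extendTNorm_mono_left (hT : IsTNormOn e T)
    (hP : ∀ x y, x < e → (⊥ < y ∧ y < e ∧ ∃ z, IncompRel (· ≤ ·) z e ∧ y ≤ z) → T x y = ⊥)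
    (z : L) : Monotone (U · z) := by
  by_cases hz : e ≤ z
  · exact extendTNorm_mono_left_of_ge hT hz
  rcases not_le_iff_lt_or_incompRel.1 hz with hz | hz
  · exact extendTNorm_mono_left_of_lt hT hP hz
  · exact extendTNorm_mono_left_of_incomp hT hz

theorem extendTNorm_mono_right (hT : IsTNormOn e T)
    (hP : ∀ x y, x < e → (⊥ < y ∧ y < e ∧ ∃ z, IncompRel (· ≤ ·) z e ∧ y ≤ z) → T x y = ⊥)
    (z : L) : Monotone (U z ·) := by
  simpa only [extendTNorm_comm T hT z] using extendTNorm_mono_left hT hP z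

theorem tnorm_eq_bot_of_extendTNorm_mono_right (hmono : ∀ z, Monotone (U z ·)) (x y : L)
    (hx : x < e) (hy : ⊥ < y ∧ y < e ∧ ∃ z, IncompRel (· ≤ ·) z e ∧ y ≤ z) : T x y = ⊥ := by
  obtain ⟨-, hye, z, hz, hyz⟩ := hy
  have : U x y ≤ U x z := hmono x hyz
  rwa [extendTNorm_of_le_of_le hx.le hye.le, extendTNorm_of_lt_of_incomp hx hz, le_bot_iff] at this

theorem inf_incomp_or_eq_bot_of_extendTNorm_assoc (hassoc : ∀ x y z, U (U x y) z = U x (U y z))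
    (y z : L) (hy : IncompRel (· ≤ ·) y e) (hz : IncompRel (· ≤ ·) z e) :
    IncompRel (· ≤ ·) (y ⊓ z) e ∨ y ⊓ z = ⊥ := by
  rcases not_le_iff_lt_or_incompRel.1 fun h => hy.not_ge (h.trans inf_le_left) with hyz | hyz
  · have := hassoc y z z
    rw [extendTNorm_of_incomp_of_incomp hy hz, extendTNorm_of_incomp_of_incomp hz hz, inf_idem,
      extendTNorm_of_incomp_of_incomp hy hz, extendTNorm_of_lt_of_incomp hyz hz] at this
    exact Or.inr this.symm
  · exact Or.inl hyz

end ExtendTNorm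

open Classical in
theorem stmt14_general {L : Type*} [Lattice L] [BoundedOrder L] (e : L)
    (he0 : e ≠ ⊥)
    (T : L → L → L)
    (hTcomm : ∀ x y, x ≤ e → y ≤ e → T x y = T y x)
    (hTassoc : ∀ x y z, x ≤ e → y ≤ e → z ≤ e → T (T x y) z = T x (T y z))
    (hTmono : ∀ x y z, x ≤ e → y ≤ e → z ≤ e → x ≤ y → T x z ≤ T y z)
    (hTe : ∀ x, x ≤ e → T e x = x ∧ T x e = x)
    (U : L → L → L)
    (hU : ∀ x y, U x y =
      if x ≤ e ∧ y ≤ e then T x y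
      else if e ≤ x ∧ (¬ y ≤ e ∧ ¬ e ≤ y) then y
      else if (¬ x ≤ e ∧ ¬ e ≤ x) ∧ e ≤ y then x
      else if (x < e ∧ (¬ y ≤ e ∧ ¬ e ≤ y)) ∨ ((¬ x ≤ e ∧ ¬ e ≤ x) ∧ y < e) then (⊥ : L)
      else if (x < e ∧ e ≤ y) ∨ (e ≤ x ∧ y < e) ∨
          ((¬ x ≤ e ∧ ¬ e ≤ x) ∧ (¬ y ≤ e ∧ ¬ e ≤ y)) then x ⊓ y
      else x ⊔ y) :
    ((∀ x y, U x y = U y x) ∧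
      (∀ x y z, U (U x y) z = U x (U y z)) ∧
      (∀ x y z, x ≤ y → U x z ≤ U y z ∧ U z x ≤ U z y) ∧
      (∀ x, U e x = x ∧ U x e = x)) ↔
    ((∀ x y, x < e → (⊥ < y ∧ y < e ∧ ∃ z, (¬ z ≤ e ∧ ¬ e ≤ z) ∧ y ≤ z) → T x y = ⊥) ∧
     (∀ y z, (¬ y ≤ e ∧ ¬ e ≤ y) → (¬ z ≤ e ∧ ¬ e ≤ z) →
      (¬ y ⊓ z ≤ e ∧ ¬ e ≤ y ⊓ z) ∨ y ⊓ z = ⊥)) := by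
  have hT : IsTNormOn e T := ⟨hTcomm, hTassoc, hTmono, hTe⟩
  obtain rfl : U = extendTNorm e T := funext₂ hU
  constructor
  · rintro ⟨-, hassoc, hmono, -⟩
    exact ⟨tnorm_eq_bot_of_extendTNorm_mono_right fun z _ _ hxy => (hmono _ _ z hxy).2,
      inf_incomp_or_eq_bot_of_extendTNorm_assoc hassoc⟩
  · rintro ⟨hP, hinf⟩
    exact ⟨extendTNorm_comm T hT, extendTNorm_assoc he0 hT hinf,
      fun x y z hxy => ⟨extendTNorm_mono_left hT hP z hxy, extendTNorm_mono_right hT hP z hxy⟩,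
      extendTNorm_neutral hT⟩

open Classical in
theorem stmt14 {L : Type*} [Lattice L] [BoundedOrder L] (e : L)
    (he0 : e ≠ ⊥) (he1 : e ≠ ⊤)
    (T : L → L → L)
    (hTcl : ∀ x y, x ≤ e → y ≤ e → T x y ≤ e)
    (hTcomm : ∀ x y, x ≤ e → y ≤ e → T x y = T y x)
    (hTassoc : ∀ x y z, x ≤ e → y ≤ e → z ≤ e → T (T x y) z = T x (T y z))
    (hTmono : ∀ x y z, x ≤ e → y ≤ e → z ≤ e → x ≤ y → T x z ≤ T y z)
    (hTe : ∀ x, x ≤ e → T e x = x ∧ T x e = x)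
    (U : L → L → L)
    (hU : ∀ x y, U x y =
      if x ≤ e ∧ y ≤ e then T x y
      else if e ≤ x ∧ (¬ y ≤ e ∧ ¬ e ≤ y) then y
      else if (¬ x ≤ e ∧ ¬ e ≤ x) ∧ e ≤ y then x
      else if (x < e ∧ (¬ y ≤ e ∧ ¬ e ≤ y)) ∨ ((¬ x ≤ e ∧ ¬ e ≤ x) ∧ y < e) then (⊥ : L)
      else if (x < e ∧ e ≤ y) ∨ (e ≤ x ∧ y < e) ∨
          ((¬ x ≤ e ∧ ¬ e ≤ x) ∧ (¬ y ≤ e ∧ ¬ e ≤ y)) then x ⊓ y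
      else x ⊔ y) :
    ((∀ x y, U x y = U y x) ∧
      (∀ x y z, U (U x y) z = U x (U y z)) ∧
      (∀ x y z, x ≤ y → U x z ≤ U y z ∧ U z x ≤ U z y) ∧
      (∀ x, U e x = x ∧ U x e = x)) ↔
    ((∀ x y, x < e → (⊥ < y ∧ y < e ∧ ∃ z, (¬ z ≤ e ∧ ¬ e ≤ z) ∧ y ≤ z) → T x y = ⊥) ∧
     (∀ y z, (¬ y ≤ e ∧ ¬ e ≤ y) → (¬ z ≤ e ∧ ¬ e ≤ z) →
      (¬ y ⊓ z ≤ e ∧ ¬ e ≤ y ⊓ z) ∨ y ⊓ z = ⊥)) :=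
  stmt14_general e he0 T hTcomm hTassoc hTmono hTe U hU
end

section
/- Consider the bounded lattice $L_1=\{0,e,b,a,1\}$ with order relations $0<e<a<1$, $0<b<a$, and $b\parallel e$ (so $I_e=\{b\}$). Let $S_e(x,y)=x\vee y$ on $\{e,a,1\}=[e,1]$. Define $U_S(x,y)=0$ on $[0,e)^2$; $S_e(x,y)$ on $[e,1]^2$; $y$ on $[0,e]\times I_e$; $x$ on $I_e\times[0,e]$; $x\wedge y$ otherwise. Then $U_S$ is not increasing: $U_S(0,a)=0 < b = U_S(0,b)$ although $b\leq a$. In particular, $U_S$ is not a uninorm on $L_1$. -/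
/-!
Since `0 ≤ e` and `b ∥ e`, the pair `(0, b)` falls under the clause on `[0,e] × I_e`, so
`U(0,b) = b`; the pair `(0, a)` falls under none of the special clauses, so `U(0,a) = 0 ∧ a = 0`.
As `b ≤ a` and `b ≠ 0`, `U(0, ·)` is not increasing, whereas every uninorm is.
-/

section CandidateUninorm

variable {L : Type*} [Lattice L] [BoundedOrder L] {e x : L}

open Classical in
/-- The construction `U_S` with `S_e = ⊔`; `I_e` is encoded as `¬ y ≤ e ∧ ¬ e ≤ y`. -/
noncomputable def candidateUninorm (e : L) (x y : L) : L :=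
  if x < e ∧ y < e then ⊥
  else if e ≤ x ∧ e ≤ y then x ⊔ y
  else if x ≤ e ∧ (¬ y ≤ e ∧ ¬ e ≤ y) then y
  else if (¬ x ≤ e ∧ ¬ e ≤ x) ∧ y ≤ e then x
  else x ⊓ y

theorem candidateUninorm_bot_left_of_le (he : ⊥ < e) (hx : e ≤ x) :
    candidateUninorm e ⊥ x = ⊥ := by
  rw [candidateUninorm, if_neg fun h => (h.2.trans_le hx).false,
    if_neg fun h => he.not_ge h.1, if_neg fun h => h.2.2 hx,
    if_neg fun h => h.1.1 bot_le, bot_inf_eq]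

theorem candidateUninorm_bot_left_of_incomparable (hxe : ¬ x ≤ e) (hex : ¬ e ≤ x) :
    candidateUninorm e ⊥ x = x := by
  rw [candidateUninorm, if_neg fun h => hxe h.2.le, if_neg fun h => hex h.2,
    if_pos ⟨bot_le, hxe, hex⟩]

end CandidateUninorm

open Classical in
theorem stmt17_general {L : Type*} [Lattice L] [BoundedOrder L]
    (e a b : L)
    (h0e : ⊥ < e) (hea : e < a)
    (h0b : ⊥ < b) (hba : b < a)
    (hbe : ¬ b ≤ e) (heb : ¬ e ≤ b)
    (U : L → L → L)
    (hU : ∀ x y, U x y =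
      if x < e ∧ y < e then (⊥ : L)
      else if e ≤ x ∧ e ≤ y then x ⊔ y
      else if x ≤ e ∧ (¬ y ≤ e ∧ ¬ e ≤ y) then y
      else if (¬ x ≤ e ∧ ¬ e ≤ x) ∧ y ≤ e then x
      else x ⊓ y) :
    U ⊥ a = ⊥ ∧ U ⊥ b = b ∧
    ¬ (∀ x y z, x ≤ y → U z x ≤ U z y) ∧
    ¬ ((∀ x y, U x y = U y x) ∧
      (∀ x y z, U (U x y) z = U x (U y z)) ∧
      (∀ x y z, x ≤ y → U x z ≤ U y z ∧ U z x ≤ U z y) ∧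
      (∀ x, U e x = x ∧ U x e = x)) := by
  obtain rfl : U = candidateUninorm e := funext fun x => funext (hU x)
  have hUa := candidateUninorm_bot_left_of_le h0e hea.le
  have hUb := candidateUninorm_bot_left_of_incomparable hbe heb
  have not_mono : ¬ ∀ x y z, x ≤ y → candidateUninorm e z x ≤ candidateUninorm e z y :=
    fun h => h0b.ne' <| le_bot_iff.1 <| by simpa only [hUa, hUb] using h b a ⊥ hba.le
  exact ⟨hUa, hUb, not_mono, fun h => not_mono fun x y z hxy => (h.2.2.1 x y z hxy).2⟩

open Classical in
theorem stmt17 {L : Type*} [Lattice L] [BoundedOrder L]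
    (e a b : L)
    (h0e : ⊥ < e) (hea : e < a) (ha1 : a < ⊤)
    (h0b : ⊥ < b) (hba : b < a)
    (hbe : ¬ b ≤ e) (heb : ¬ e ≤ b)
    (hcar : ∀ x : L, x = ⊥ ∨ x = e ∨ x = b ∨ x = a ∨ x = ⊤)
    (U : L → L → L)
    (hU : ∀ x y, U x y =
      if x < e ∧ y < e then (⊥ : L)
      else if e ≤ x ∧ e ≤ y then x ⊔ y
      else if x ≤ e ∧ (¬ y ≤ e ∧ ¬ e ≤ y) then y
      else if (¬ x ≤ e ∧ ¬ e ≤ x) ∧ y ≤ e then x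
      else x ⊓ y) :
    U ⊥ a = ⊥ ∧ U ⊥ b = b ∧
    ¬ (∀ x y z, x ≤ y → U z x ≤ U z y) ∧
    ¬ ((∀ x y, U x y = U y x) ∧
      (∀ x y z, U (U x y) z = U x (U y z)) ∧
      (∀ x y z, x ≤ y → U x z ≤ U y z ∧ U z x ≤ U z y) ∧
      (∀ x, U e x = x ∧ U x e = x)) :=
  stmt17_general e a b h0e hea h0b hba hbe heb U hU
end
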